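/- arXiv:1904.10292 — 9 statements merged into one kernel-verified Lean document; each statement's English description precedes it below -/
import Mathlib

section
/- Let n ≥ 0 and s ≥ 1 be integers, and let F_1, …, F_s ⊆ 2^[n] be cross-dependent families. Then ‖F_1‖_n + ‖F_2‖_n + … + ‖F_s‖_n ≤ (n+1)(s−1); equivalently, ρ_n(F_1) + … + ρ_n(F_s) ≤ s−1. -/
/-!
Induction on the number of families plus the size of the ground set `X`. If some family
contains `∅`, the remaining families are still cross-dependent and the removed one has norm at
most `|X| + 1`. Otherwise, for each `x ∈ X`, replacing one family by its link at `x` and all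
others by their deletions at `x` gives cross-dependent families on `X \ {x}` (put `x` back into
the set chosen from the link). Averaging these bounds over `x` by double counting, the binomial
identities `(n + 1 - k) / C(n, k) = (n + 1) / C(n + 1, k)` and
`(k + 1) / C(n, k) = (n + 1) / C(n + 1, k + 1)` turn deletion and link norms back into `‖F_i‖`,
up to the loss of `X` itself from the deletions of the other `s - 1` families.
-/

open Finset

/-- The binomial norm of a family `F` of subsets of `[n]`:
`‖F‖ₙ = ∑_{A ∈ F} 1 / C(n, |A|)`. -/
noncomputable def binNorm (n : ℕ) (F : Finset (Finset ℕ)) : ℝ :=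
  ∑ A ∈ F, 1 / (n.choose A.card : ℝ)

/-- Families `F 1, …, F s` are cross-dependent if one cannot pick `f i ∈ F i`
with the `f i` pairwise disjoint. -/
def CrossDep {s : ℕ} (F : Fin s → Finset (Finset ℕ)) : Prop :=
  ¬ ∃ f : Fin s → Finset ℕ, (∀ i, f i ∈ F i) ∧
      Pairwise fun i j => Disjoint (f i) (f j)

open Function

theorem Nat.cast_succ_sub_div_choose {n k : ℕ} (hk : k ≤ n) :
    ((n + 1 - k : ℕ) : ℝ) / n.choose k = (n + 1) / (n + 1).choose k := by
  rw [div_eq_div_iff (by exact_mod_cast (choose_pos hk).ne')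
    (by exact_mod_cast (choose_pos (by omega)).ne'), mul_comm, mul_comm ((n : ℝ) + 1)]
  exact_mod_cast (choose_mul_succ_eq n k).symm

theorem Nat.cast_succ_div_choose {n k : ℕ} (hk : k ≤ n) :
    ((k + 1 : ℕ) : ℝ) / n.choose k = (n + 1) / (n + 1).choose (k + 1) := by
  rw [div_eq_div_iff (by exact_mod_cast (choose_pos hk).ne')
    (by exact_mod_cast (choose_pos (by omega)).ne'), mul_comm]
  exact_mod_cast (add_one_mul_choose_eq n k).symm

theorem binNorm_mono {n : ℕ} {𝒜 ℬ : Finset (Finset ℕ)} (h : 𝒜 ⊆ ℬ) :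
    binNorm n 𝒜 ≤ binNorm n ℬ :=
  sum_le_sum_of_subset_of_nonneg h fun _ _ _ => by positivity

theorem binNorm_powerset (X : Finset ℕ) : binNorm #X X.powerset = #X + 1 := by
  have hlayer :
      ∀ j ∈ range (#X + 1), ∑ A ∈ X.powersetCard j, 1 / ((#X).choose #A : ℝ) = 1 := by
    intro j hj
    rw [sum_congr rfl fun A hA => by rw [(mem_powersetCard.1 hA).2], sum_const,
      card_powersetCard, nsmul_eq_mul, mul_one_div_cancel]
    exact_mod_cast (Nat.choose_pos (Nat.lt_succ_iff.1 (mem_range.1 hj))).ne'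
  rw [binNorm, sum_powerset, sum_congr rfl hlayer]
  simp

theorem binNorm_le_of_subset_powerset {X : Finset ℕ} {𝒜 : Finset (Finset ℕ)}
    (h : 𝒜 ⊆ X.powerset) : binNorm #X 𝒜 ≤ #X + 1 :=
  (binNorm_mono h).trans_eq (binNorm_powerset X)

section

variable {α : Type*} [DecidableEq α] {𝒜 : Finset (Finset α)} {X : Finset α}

theorem nonMemberSubfamily_subset_powerset_erase (h : 𝒜 ⊆ X.powerset) (x : α) :
    𝒜.nonMemberSubfamily x ⊆ (X.erase x).powerset := fun A hA => by
  rw [mem_nonMemberSubfamily] at hA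
  exact mem_powerset.2 (subset_erase.2 ⟨mem_powerset.1 (h hA.1), hA.2⟩)

theorem memberSubfamily_subset_powerset_erase (h : 𝒜 ⊆ X.powerset) (x : α) :
    𝒜.memberSubfamily x ⊆ (X.erase x).powerset := fun A hA => by
  rw [mem_memberSubfamily] at hA
  exact mem_powerset.2
    (subset_erase.2 ⟨(subset_insert x A).trans (mem_powerset.1 (h hA.1)), hA.2⟩)

end

theorem sum_binNorm_nonMemberSubfamily (n : ℕ) (X : Finset ℕ) (𝒜 : Finset (Finset ℕ)) :
    ∑ x ∈ X, binNorm n (𝒜.nonMemberSubfamily x) =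
      ∑ A ∈ 𝒜, (#(X \ A) : ℝ) / n.choose #A := by
  simp only [binNorm, nonMemberSubfamily, sum_filter]
  rw [sum_comm]
  refine sum_congr rfl fun A _ => ?_
  rw [← sum_filter, filter_notMem_eq_sdiff, sum_const, nsmul_eq_mul, mul_one_div]

theorem sum_binNorm_memberSubfamily (n : ℕ) (X : Finset ℕ) (𝒜 : Finset (Finset ℕ)) :
    ∑ x ∈ X, binNorm n (𝒜.memberSubfamily x) =
      ∑ A ∈ 𝒜, (#(X ∩ A) : ℝ) / n.choose (#A - 1) := by
  have hlink : ∀ x, binNorm n (𝒜.memberSubfamily x) =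
      ∑ A ∈ 𝒜, if x ∈ A then 1 / (n.choose (#A - 1) : ℝ) else 0 := by
    intro x
    have hinj : Set.InjOn (erase · x) ({A ∈ 𝒜 | x ∈ A} : Finset _) :=
      (erase_injOn' x).mono fun A hA => (mem_filter.1 hA).2
    rw [binNorm, memberSubfamily, sum_image hinj, ← sum_filter]
    exact sum_congr rfl fun A hA => by rw [card_erase_of_mem (mem_filter.1 hA).2]
  simp only [hlink]
  rw [sum_comm]
  refine sum_congr rfl fun A _ => ?_
  rw [← sum_filter, filter_mem_eq_inter, sum_const, nsmul_eq_mul, mul_one_div]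

section

variable {n : ℕ} {X : Finset ℕ} {𝒜 : Finset (Finset ℕ)}

theorem sum_binNorm_nonMemberSubfamily_eq (hX : #X = n + 1) (h𝒜 : 𝒜 ⊆ X.powerset) :
    ∑ x ∈ X, binNorm n (𝒜.nonMemberSubfamily x) =
      (n + 1) * binNorm (n + 1) 𝒜 - if X ∈ 𝒜 then (n + 1 : ℝ) else 0 := by
  have hterm : ∀ A ∈ 𝒜, (#(X \ A) : ℝ) / n.choose #A =
      (n + 1) * (1 / ((n + 1).choose #A : ℝ)) - if A = X then (n + 1 : ℝ) else 0 := by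
    intro A hA
    have hAX := mem_powerset.1 (h𝒜 hA)
    rw [mul_one_div]
    obtain rfl | hne := eq_or_ne A X
    · simp [hX]
    · have hlt : #A ≤ n := by
        have := card_lt_card (ssubset_of_subset_of_ne hAX hne); omega
      rw [if_neg hne, sub_zero, card_sdiff_of_subset hAX, hX,
        ← Nat.cast_succ_sub_div_choose hlt]
  rw [sum_binNorm_nonMemberSubfamily, sum_congr rfl hterm, sum_sub_distrib, ← mul_sum,
    sum_ite_eq' 𝒜 X]
  rfl

theorem sum_binNorm_memberSubfamily_eq (hX : #X = n + 1) (h𝒜 : 𝒜 ⊆ X.powerset)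
    (hempty : ∅ ∉ 𝒜) :
    ∑ x ∈ X, binNorm n (𝒜.memberSubfamily x) = (n + 1) * binNorm (n + 1) 𝒜 := by
  rw [sum_binNorm_memberSubfamily, binNorm, mul_sum]
  refine sum_congr rfl fun A hA => ?_
  obtain ⟨k, hk⟩ : ∃ k, #A = k + 1 := Nat.exists_eq_add_one_of_ne_zero <|
    card_ne_zero.2 (nonempty_iff_ne_empty.2 (ne_of_mem_of_not_mem hA hempty))
  have hAX := mem_powerset.1 (h𝒜 hA)
  have hkn : k ≤ n := by have := card_le_card hAX; omega
  rw [inter_eq_right.2 hAX, mul_one_div, hk, Nat.add_sub_cancel, Nat.cast_succ_div_choose hkn]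

end

theorem sum_binNorm_le_of_forall_update {ι : Type*} [Fintype ι] [DecidableEq ι] {n : ℕ}
    {X : Finset ℕ} {F : ι → Finset (Finset ℕ)} (hX : #X = n + 1)
    (hF : ∀ i, F i ⊆ X.powerset) (hempty : ∀ i, ∅ ∉ F i) (j : ι)
    (hlink : ∀ x ∈ X, ∑ i, binNorm n (update (fun i => (F i).nonMemberSubfamily x) j
      ((F j).memberSubfamily x) i) ≤ (n + 1) * (Fintype.card ι - 1)) :
    ∑ i, binNorm (n + 1) (F i) ≤ (n + 2) * (Fintype.card ι - 1) := by
  set e : ι → ℝ := fun i => if X ∈ F i then (n + 1 : ℝ) else 0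
  have hcorrection : ∑ i ∈ univ \ {j}, e i ≤ (n + 1) * (Fintype.card ι - 1) := by
    calc ∑ i ∈ univ \ {j}, e i ≤ ∑ i ∈ univ \ {j}, (n + 1 : ℝ) :=
          sum_le_sum fun i _ => by unfold e; split_ifs <;> [exact le_rfl; positivity]
      _ = (n + 1) * (Fintype.card ι - 1) := by
          rw [sum_const, card_sdiff_of_subset (subset_univ _), card_singleton, card_univ,
            nsmul_eq_mul, Nat.cast_pred (Fintype.card_pos_iff.2 ⟨j⟩), mul_comm]
  have hdouble : ∑ x ∈ X, ∑ i, binNorm n (update (fun i => (F i).nonMemberSubfamily x) j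
      ((F j).memberSubfamily x) i) =
        (n + 1) * ∑ i, binNorm (n + 1) (F i) - ∑ i ∈ univ \ {j}, e i := by
    simp_rw [apply_update (fun _ => binNorm n), sum_update_of_mem (mem_univ j)]
    rw [sum_add_distrib, sum_comm, sum_binNorm_memberSubfamily_eq hX (hF j) (hempty j),
      sum_congr rfl fun i _ => sum_binNorm_nonMemberSubfamily_eq hX (hF i), sum_sub_distrib,
      ← mul_sum, mul_sum, mul_sum, sum_eq_add_sum_sdiff_singleton_of_mem (mem_univ j)]
    ring
  have hsum := sum_le_sum hlink
  rw [hdouble, sum_const, hX, nsmul_eq_mul, Nat.cast_add_one] at hsum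
  have hpos : (0 : ℝ) < n + 1 := by positivity
  refine le_of_mul_le_mul_left ?_ hpos
  linarith

namespace CrossDep

theorem eq_empty {F : Fin 1 → Finset (Finset ℕ)} (h : CrossDep F) : F 0 = ∅ :=
  eq_empty_iff_forall_notMem.2 fun A hA =>
    h ⟨fun _ => A, fun i => by rwa [Subsingleton.elim i 0], Subsingleton.pairwise⟩

theorem succAbove {s : ℕ} {F : Fin (s + 1) → Finset (Finset ℕ)} (h : CrossDep F)
    {j : Fin (s + 1)} (hj : ∅ ∈ F j) : CrossDep fun i => F (j.succAbove i) := by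
  rintro ⟨f, hf, hdisj⟩
  refine h ⟨j.insertNth ∅ f, fun k => ?_, fun k l hkl => ?_⟩
  · cases k using j.succAboveCases <;> simp [hf, hj]
  · cases k using j.succAboveCases <;> cases l using j.succAboveCases
    all_goals simp only [Fin.insertNth_apply_same, Fin.insertNth_apply_succAbove,
      disjoint_empty_left, disjoint_empty_right]
    exact hdisj (ne_of_apply_ne _ hkl)

theorem update_memberSubfamily {s : ℕ} {F : Fin s → Finset (Finset ℕ)} (h : CrossDep F)
    (j : Fin s) (x : ℕ) :
    CrossDep (update (fun i => (F i).nonMemberSubfamily x) j ((F j).memberSubfamily x)) := by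
  rintro ⟨f, hf, hdisj⟩
  have hx : ∀ i ≠ j, x ∉ f i := fun i hi => by
    simpa [hi] using (mem_nonMemberSubfamily.1 (by simpa [hi] using hf i)).2
  refine h ⟨update f j (insert x (f j)), fun i => ?_, fun k l hkl => ?_⟩
  · rcases eq_or_ne i j with rfl | hi
    · simpa using (mem_memberSubfamily.1 (by simpa using hf i)).1
    · simpa [hi] using (mem_nonMemberSubfamily.1 (by simpa [hi] using hf i)).1
  · rcases eq_or_ne k j with rfl | hk
    · rw [update_self, update_of_ne hkl.symm]
      exact disjoint_insert_left.2 ⟨hx l hkl.symm, hdisj hkl⟩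
    rcases eq_or_ne l j with rfl | hl
    · rw [update_self, update_of_ne hkl]
      exact disjoint_insert_right.2 ⟨hx k hkl, hdisj hkl⟩
    rw [update_of_ne hk, update_of_ne hl]
    exact hdisj hkl

end CrossDep

theorem CrossDep.sum_binNorm_le {s : ℕ} {F : Fin (s + 1) → Finset (Finset ℕ)} {X : Finset ℕ}
    (hF : ∀ i, F i ⊆ X.powerset) (h : CrossDep F) :
    ∑ i, binNorm #X (F i) ≤ (#X + 1) * s := by
  cases s with
  | zero => simp [h.eq_empty, binNorm]
  | succ s =>
    by_cases hempty : ∃ j, ∅ ∈ F j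
    · obtain ⟨j, hj⟩ := hempty
      have hrest := (h.succAbove hj).sum_binNorm_le fun i => hF _
      rw [Fin.sum_univ_succAbove _ j]
      push_cast
      linarith [binNorm_le_of_subset_powerset (hF j)]
    push Not at hempty
    rcases eq_or_ne #X 0 with hX | hX
    · have hF_empty : ∀ i, F i = ∅ := fun i => eq_empty_iff_forall_notMem.2 fun A hA => by
        have hA_empty : A = ∅ := by simpa [card_eq_zero.1 hX] using hF i hA
        exact hempty i (hA_empty ▸ hA)
      simp only [hF_empty, binNorm, sum_empty, sum_const_zero]
      positivity
    obtain ⟨n, hX⟩ := Nat.exists_eq_add_one_of_ne_zero hX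
    have key := sum_binNorm_le_of_forall_update hX hF hempty 0 fun x hx => by
      have hrec := (h.update_memberSubfamily 0 x).sum_binNorm_le (X := X.erase x) fun i => by
        rcases eq_or_ne i 0 with rfl | hi
        · simpa using memberSubfamily_subset_powerset_erase (hF 0) x
        · simpa [hi] using nonMemberSubfamily_subset_powerset_erase (hF i) x
      simpa [card_erase_of_mem hx, hX] using hrec
    rw [Fintype.card_fin] at key
    rw [hX]
    push_cast at key ⊢
    linarith
termination_by s + #X
decreasing_by
  · omega
  · have := card_erase_lt_of_mem hx
    omega

theorem stmt_0 (n s : ℕ) (hs : 1 ≤ s) (F : Fin s → Finset (Finset ℕ))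
    (hsub : ∀ i, ∀ A ∈ F i, A ⊆ Finset.range n)
    (hcross : CrossDep F) :
    ∑ i, binNorm n (F i) ≤ ((n : ℝ) + 1) * ((s : ℝ) - 1) := by
  obtain ⟨s, rfl⟩ := Nat.exists_eq_add_of_le' hs
  have key := hcross.sum_binNorm_le (X := range n) fun i A hA => mem_powerset.2 (hsub i A hA)
  rw [card_range] at key
  push_cast
  linarith
end

section
/- (Multi-layered inequality.) Let n ≥ r ≥ 0 be integers and let F_1, …, F_s ⊆ 2^[n] be cross-dependent families. Let k_1, …, k_s be nonnegative integers satisfying k_1 + … + k_s + r = n. Then Σ_{j=0}^{r} Σ_{i=1}^{s} φ_i(k_i + j) ≤ (r+1)(s−1). -/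
open Finset

/-- `φ(ℓ)` for a family `F ⊆ 2^[n]`: the fraction `|F^(ℓ)| / C(n, ℓ)` of
`ℓ`-element subsets of `[n]` belonging to `F`. -/
noncomputable def phi (n : ℕ) (F : Finset (Finset ℕ)) (ℓ : ℕ) : ℝ :=
  ((F.filter fun A => A.card = ℓ).card : ℝ) / (n.choose ℓ : ℝ)

/-!
Averaging over a uniformly random permutation `σ` of the ground set reduces the inequality to
the case `k = 0`: fix pairwise disjoint blocks `K i` of sizes `k i` and, outside them, a copy of
an `r`-element set `β`. The families `H i = {U ⊆ β | σ (K i ∪ U) ∈ F i}` are cross-dependent, and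
the average over `σ` of the density of `H i` on layer `j` is the density of `F i` on layer
`k i + j`.

The case `k = 0`, `∑_{ℓ ≤ r} ∑_i φ_i(ℓ) ≤ (s - 1)(r + 1)`, is proved by induction on `s` and `r`.
If `∅ ∈ F i₀`, the other families are still cross-dependent and row `i₀` contributes at most
`r + 1`. Otherwise `φ_i(0) = 0` for every `i`, and the reduction from `r + 1` to `r` with `k` the
indicator of `i₀` gives one inequality for each `i₀`; their sum telescopes to the bound for
`r + 1`.
-/

open Equiv
open scoped Pointwise Nat

noncomputable def layerDensity {α : Type*} [Fintype α] (F : Finset (Finset α)) (ℓ : ℕ) : ℝ :=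
  #{A ∈ F | #A = ℓ} / (Fintype.card α).choose ℓ

def IsCrossDependent {ι α : Type*} (F : ι → Finset (Finset α)) : Prop :=
  ¬ ∃ f : ι → Finset α, (∀ i, f i ∈ F i) ∧ Pairwise fun i j => Disjoint (f i) (f j)

lemma Finset.disjoint_smul_finset {α G : Type*} [DecidableEq α] [Group G] [MulAction G α]
    (g : G) {s t : Finset α} : Disjoint (g • s) (g • t) ↔ Disjoint s t := by
  rw [← disjoint_coe, coe_smul_finset, coe_smul_finset, Set.disjoint_smul_set, disjoint_coe]

section Density

variable {α : Type*} [Fintype α]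

lemma layerDensity_le_one (F : Finset (Finset α)) (ℓ : ℕ) : layerDensity F ℓ ≤ 1 := by
  refine div_le_one_of_le₀ ?_ (Nat.cast_nonneg _)
  have : {A ∈ F | #A = ℓ} ⊆ powersetCard ℓ univ := fun A hA => by
    simpa using (mem_filter.1 hA).2
  exact_mod_cast (card_le_card this).trans_eq (by rw [card_powersetCard, card_univ])

lemma layerDensity_zero_of_empty_notMem {F : Finset (Finset α)} (h : ∅ ∉ F) :
    layerDensity F 0 = 0 := by
  rw [layerDensity, div_eq_zero_iff, Nat.cast_eq_zero, Nat.cast_eq_zero, card_eq_zero,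
    filter_eq_empty_iff]
  exact Or.inl fun A hA hA0 => h (card_eq_zero.1 hA0 ▸ hA)

variable [DecidableEq α]

lemma card_perm_smul_eq_of_card_eq {A B : Finset α} (h : #A = #B) :
    #{σ : Perm α | σ • B = A} = #{σ : Perm α | σ • B = B} := by
  have := Set.powersetCard.isPretransitive (α := α) (n := #B)
  obtain ⟨τ, hτ⟩ := MulAction.exists_smul_eq (Perm α)
    (⟨B, rfl⟩ : Set.powersetCard α #B) ⟨A, h⟩
  have hτ : τ • B = A := congrArg Subtype.val hτ
  symm
  refine card_equiv (Equiv.mulLeft τ) fun σ => ?_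
  simp [mul_smul, ← hτ]

lemma choose_mul_card_stabilizer (B : Finset α) :
    (Fintype.card α).choose #B * #{σ : Perm α | σ • B = B} = (Fintype.card α)! := by
  have := card_eq_sum_card_fiberwise (s := univ) (t := powersetCard #B univ)
    (f := fun σ : Perm α => σ • B) (fun σ _ => by simp [card_smul_finset])
  rw [card_univ, Fintype.card_perm, Finset.sum_congr rfl fun A hA =>
    card_perm_smul_eq_of_card_eq (mem_powersetCard.1 hA).2, sum_const, card_powersetCard,
    card_univ, smul_eq_mul] at this
  exact this.symm

theorem card_filter_perm_smul_mem (F : Finset (Finset α)) (B : Finset α) :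
    (#{σ : Perm α | σ • B ∈ F} : ℝ) = (Fintype.card α)! * layerDensity F #B := by
  have hfiber : #{σ : Perm α | σ • B ∈ F} =
      #{A ∈ F | #A = #B} * #{σ : Perm α | σ • B = B} := by
    rw [card_eq_sum_card_fiberwise (t := {A ∈ F | #A = #B}) (f := fun σ : Perm α => σ • B)
      (fun σ hσ => by simpa [card_smul_finset] using hσ)]
    refine sum_const_nat fun A hA => ?_
    rw [mem_filter] at hA
    rw [filter_filter, ← card_perm_smul_eq_of_card_eq hA.2]
    congr 1
    exact filter_congr fun σ _ => ⟨And.right, fun h => ⟨h ▸ hA.1, h⟩⟩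
  have hC : ((Fintype.card α).choose #B : ℝ) ≠ 0 := by
    exact_mod_cast (Nat.choose_pos (card_le_univ B)).ne'
  rw [layerDensity, hfiber, ← choose_mul_card_stabilizer B]
  push_cast
  field_simp

theorem sum_perm_layerDensity_filter_smul_mem {β : Type*} [Fintype β]
    (F : Finset (Finset α)) (g : Finset β → Finset α) {c j : ℕ} (hg : ∀ U, #(g U) = c + #U)
    (hj : j ≤ Fintype.card β) :
    ∑ σ : Perm α, layerDensity ({U | σ • g U ∈ F} : Finset (Finset β)) j =
      (Fintype.card α)! * layerDensity F (c + j) := by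
  have hswap : ∑ σ : Perm α, #{U ∈ ({U | σ • g U ∈ F} : Finset (Finset β)) | #U = j} =
      ∑ U ∈ powersetCard j univ, #{σ : Perm α | σ • g U ∈ F} := by
    refine Eq.trans ?_ (sum_card_bipartiteAbove_eq_sum_card_bipartiteBelow
      (fun (σ : Perm α) U => σ • g U ∈ F))
    refine Finset.sum_congr rfl fun σ _ => congrArg card ?_
    ext U
    simp [bipartiteAbove, and_comm]
  have hC : ((Fintype.card β).choose j : ℝ) ≠ 0 := by exact_mod_cast (Nat.choose_pos hj).ne'
  simp only [layerDensity, ← sum_div]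
  rw [← Nat.cast_sum, hswap, Nat.cast_sum, Finset.sum_congr rfl fun U hU => by
    rw [card_filter_perm_smul_mem, hg, (mem_powersetCard.1 hU).2]]
  rw [sum_const, card_powersetCard, card_univ, nsmul_eq_mul, layerDensity]
  field_simp

end Density

section Shift

variable {ι β : Type*}

def blockShape (k : ι → ℕ) (i : ι) (U : Finset β) : Finset ((Σ i, Fin (k i)) ⊕ β) :=
  (univ.map (Function.Embedding.sigmaMk i)).disjSum U

lemma card_blockShape (k : ι → ℕ) (i : ι) (U : Finset β) : #(blockShape k i U) = k i + #U := by
  simp [blockShape]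

lemma disjoint_blockShape {k : ι → ℕ} {i j : ι} (hij : i ≠ j) {U V : Finset β}
    (hUV : Disjoint U V) : Disjoint (blockShape k i U) (blockShape k j V) := by
  rw [blockShape, blockShape, disjoint_left]
  rintro (⟨i', a⟩ | b) hU hV
  · simp only [inl_mem_disjSum, mem_map, mem_univ, true_and, Function.Embedding.sigmaMk_apply,
      Sigma.mk.injEq] at hU hV
    obtain ⟨_, rfl, -⟩ := hU
    obtain ⟨_, rfl, -⟩ := hV
    exact hij rfl
  · rw [inr_mem_disjSum] at hU hV
    exact disjoint_left.1 hUV hU hV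

variable [Fintype ι] [Fintype β] {α : Type*} [Fintype α] [DecidableEq α]

theorem sum_sum_layerDensity_add_le {k : ι → ℕ}
    (hcard : Fintype.card α = ∑ i, k i + Fintype.card β) {C : ℝ}
    (hβ : ∀ H : ι → Finset (Finset β), IsCrossDependent H →
      ∑ ℓ ∈ range (Fintype.card β + 1), ∑ i, layerDensity (H i) ℓ ≤ C)
    {F : ι → Finset (Finset α)} (hF : IsCrossDependent F) :
    ∑ j ∈ range (Fintype.card β + 1), ∑ i, layerDensity (F i) (k i + j) ≤ C := by
  obtain ⟨e⟩ : Nonempty ((Σ i, Fin (k i)) ⊕ β ≃ α) :=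
    ⟨Fintype.equivOfCardEq (by simp [hcard])⟩
  set shape : ι → Finset β → Finset α := fun i U => (blockShape k i U).map e.toEmbedding
  set H : Perm α → ι → Finset (Finset β) := fun σ i => {U | σ • shape i U ∈ F i}
  have hH : ∀ σ, IsCrossDependent (H σ) := by
    rintro σ ⟨f, hf, hdisj⟩
    refine hF ⟨fun i => σ • shape i (f i), fun i => by simpa [H] using hf i, fun i j hij => ?_⟩
    show Disjoint (σ • shape i (f i)) (σ • shape j (f j))
    rw [Finset.disjoint_smul_finset, disjoint_map]
    exact disjoint_blockShape hij (hdisj hij)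
  have haverage : ∑ σ, ∑ ℓ ∈ range (Fintype.card β + 1), ∑ i, layerDensity (H σ i) ℓ =
      (Fintype.card α)! *
        ∑ j ∈ range (Fintype.card β + 1), ∑ i, layerDensity (F i) (k i + j) := by
    rw [sum_comm, mul_sum]
    refine Finset.sum_congr rfl fun j hj => ?_
    rw [sum_comm, mul_sum]
    exact Finset.sum_congr rfl fun i _ => sum_perm_layerDensity_filter_smul_mem _ _
      (by simp [shape, card_blockShape]) (Nat.lt_succ_iff.1 (mem_range.1 hj))
  have hbound := Finset.sum_le_sum fun σ (_ : σ ∈ univ) => hβ _ (hH σ)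
  rw [haverage, sum_const, card_univ, Fintype.card_perm, nsmul_eq_mul] at hbound
  exact le_of_mul_le_mul_left hbound (by positivity)

end Shift

lemma sum_sum_le_of_forall_single_shift_le {ι : Type*} [Fintype ι] [DecidableEq ι] [Nonempty ι]
    (f : ι → ℕ → ℝ) {r : ℕ} {B : ℝ} (h0 : ∀ i, f i 0 = 0) (hlast : ∀ i, f i (r + 1) ≤ 1)
    (hshift : ∀ i₀, ∑ j ∈ range (r + 1), ∑ i, f i ((if i = i₀ then 1 else 0) + j) ≤ B) :
    ∑ ℓ ∈ range (r + 2), ∑ i, f i ℓ ≤ B + (Fintype.card ι - 1) := by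
  set c : ℝ := (Fintype.card ι : ℝ)
  set T := ∑ ℓ ∈ range (r + 2), ∑ i, f i ℓ
  have hc : 1 ≤ c := Nat.one_le_cast.2 Fintype.card_pos
  have hsingle : ∀ i j, ∑ i₀, f i ((if i = i₀ then 1 else 0) + j) =
      f i (j + 1) + (c - 1) * f i j := by
    intro i j
    have : ∀ i₀, f i ((if i = i₀ then 1 else 0) + j) =
        f i j + if i = i₀ then f i (j + 1) - f i j else 0 := fun i₀ => by
      split_ifs <;> simp [add_comm]
    simp only [this, sum_add_distrib, sum_ite_eq, mem_univ, if_true, sum_const, card_univ,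
      nsmul_eq_mul, c]
    ring
  have hup : ∑ j ∈ range (r + 1), ∑ i, f i (j + 1) = T := by
    simp [T, sum_range_succ' _ (r + 1), h0]
  have hdown : ∑ j ∈ range (r + 1), ∑ i, f i j = T - ∑ i, f i (r + 1) := by
    simp [T, sum_range_succ _ (r + 1)]
  have hlast' : ∑ i, f i (r + 1) ≤ c := by
    simpa [c] using sum_le_sum fun i (_ : i ∈ univ) => hlast i
  have htotal : ∑ i₀ : ι, ∑ j ∈ range (r + 1), ∑ i, f i ((if i = i₀ then 1 else 0) + j) =
      T + (c - 1) * (T - ∑ i, f i (r + 1)) := by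
    rw [sum_comm, Finset.sum_congr rfl fun j _ => sum_comm]
    simp only [hsingle, sum_add_distrib, ← mul_sum, hup, hdown]
  have hsum := sum_le_sum fun i₀ (_ : i₀ ∈ univ) => hshift i₀
  rw [htotal, sum_const, card_univ, nsmul_eq_mul] at hsum
  nlinarith

lemma IsCrossDependent.succAbove {α : Type*} {s : ℕ} {F : Fin (s + 1) → Finset (Finset α)}
    (hF : IsCrossDependent F) {i₀ : Fin (s + 1)} (h : ∅ ∈ F i₀) :
    IsCrossDependent fun z => F (i₀.succAbove z) := by
  rintro ⟨f, hf, hdisj⟩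
  refine hF ⟨Fin.insertNth i₀ ∅ f, fun i => ?_, fun i j hij => ?_⟩
  · rcases Fin.eq_self_or_eq_succAbove i₀ i with hi | ⟨z, rfl⟩
    · subst i
      simpa using h
    · simpa using hf z
  · rcases Fin.eq_self_or_eq_succAbove i₀ i with hi | ⟨z, rfl⟩ <;>
      rcases Fin.eq_self_or_eq_succAbove i₀ j with hj | ⟨z', rfl⟩
    · exact absurd (hi.trans hj.symm) hij
    · simp [hi]
    · simp [hj]
    · simpa using hdisj (fun hz => hij (congrArg _ hz))

lemma sum_sum_layerDensity_le_of_succAbove {β : Type*} [Fintype β] {s : ℕ}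
    {F : Fin (s + 1) → Finset (Finset β)} (i₀ : Fin (s + 1)) {C : ℝ}
    (hrest : ∑ ℓ ∈ range (Fintype.card β + 1), ∑ z, layerDensity (F (i₀.succAbove z)) ℓ ≤ C) :
    ∑ ℓ ∈ range (Fintype.card β + 1), ∑ i, layerDensity (F i) ℓ ≤ C + (Fintype.card β + 1) := by
  have hrow : ∑ ℓ ∈ range (Fintype.card β + 1), layerDensity (F i₀) ℓ ≤ Fintype.card β + 1 := by
    simpa using sum_le_sum fun ℓ (_ : ℓ ∈ range (Fintype.card β + 1)) =>
      layerDensity_le_one (F i₀) ℓ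
  rw [Finset.sum_congr rfl fun ℓ _ => Fin.sum_univ_succAbove _ i₀, sum_add_distrib]
  linarith

theorem sum_sum_layerDensity_le (s : ℕ) {β : Type*} [Fintype β] [DecidableEq β]
    {F : Fin s → Finset (Finset β)} (hF : IsCrossDependent F) :
    ∑ ℓ ∈ range (Fintype.card β + 1), ∑ i, layerDensity (F i) ℓ ≤
      (s - 1) * (Fintype.card β + 1) := by
  induction s generalizing β with
  | zero => exact absurd ⟨fun i => i.elim0, fun i => i.elim0, fun i => i.elim0⟩ hF
  | succ s ihs =>
    obtain ⟨r, hr⟩ : ∃ r, Fintype.card β = r := ⟨_, rfl⟩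
    induction r using Nat.strong_induction_on generalizing β with
    | _ r ihr =>
      by_cases hempty : ∃ i₀, ∅ ∈ F i₀
      · obtain ⟨i₀, h⟩ := hempty
        have hbound := sum_sum_layerDensity_le_of_succAbove i₀ (ihs (hF.succAbove h))
        push_cast
        linarith
      push Not at hempty
      cases r with
      | zero => simp [hr, layerDensity_zero_of_empty_notMem (hempty _)]
      | succ r =>
        obtain ⟨b⟩ : Nonempty β := Fintype.card_pos_iff.1 (by omega)
        have hcard : Fintype.card {x // x ≠ b} = r := by
          simp [Fintype.card_subtype_compl, hr]
        have hshift := fun i₀ : Fin (s + 1) =>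
          sum_sum_layerDensity_add_le (k := fun i => if i = i₀ then 1 else 0)
            (β := {x // x ≠ b}) (by simp [hr, hcard, add_comm])
            (fun H hH => ihr r r.lt_succ_self hH hcard) hF
        rw [hcard] at hshift
        have hbound := sum_sum_le_of_forall_single_shift_le (fun i ℓ => layerDensity (F i) ℓ)
          (fun i => layerDensity_zero_of_empty_notMem (hempty i))
          (fun i => layerDensity_le_one (F i) _) hshift
        rw [hr, show r + 1 + 1 = r + 2 from rfl]
        push_cast [Fintype.card_fin] at hbound ⊢
        linarith

lemma IsCrossDependent.comap {ι α β : Type*} [Fintype α] [DecidableEq β]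
    {F : ι → Finset (Finset β)} (hF : IsCrossDependent F) (e : α ↪ β) :
    IsCrossDependent fun i => ({A | A.map e ∈ F i} : Finset (Finset α)) := by
  rintro ⟨f, hf, hdisj⟩
  exact hF ⟨fun i => (f i).map e, fun i => by simpa using hf i,
    fun i j hij => (disjoint_map e).2 (hdisj hij)⟩

lemma phi_eq_layerDensity {n : ℕ} {F : Finset (Finset ℕ)} (hF : ∀ A ∈ F, A ⊆ range n) (ℓ : ℕ) :
    phi n F ℓ = layerDensity ({A | A.map Fin.valEmbedding ∈ F} : Finset (Finset (Fin n))) ℓ := by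
  rw [phi, layerDensity, Fintype.card_fin]
  congr 2
  symm
  refine card_bij (fun A _ => A.map Fin.valEmbedding) (fun A hA => by simpa using hA)
    (fun A _ B _ h => map_injective _ h) fun B hB => ?_
  rw [mem_filter] at hB
  obtain ⟨A, -, rfl⟩ := subset_map_iff.1
    ((hF B hB.1).trans_eq (by rw [Fin.map_valEmbedding_univ, Nat.Iio_eq_range]))
  exact ⟨A, by simpa using hB, rfl⟩

theorem stmt_2_general (n r s : ℕ) (F : Fin s → Finset (Finset ℕ))
    (hsub : ∀ i, ∀ A ∈ F i, A ⊆ Finset.range n)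
    (hcross : CrossDep F)
    (k : Fin s → ℕ) (hk : (∑ i, k i) + r = n) :
    ∑ j ∈ Finset.range (r + 1), ∑ i, phi n (F i) (k i + j) ≤
      ((r : ℝ) + 1) * ((s : ℝ) - 1) := by
  have hcard : Fintype.card (Fin n) = ∑ i, k i + Fintype.card (Fin r) := by simp [hk]
  have hbound := sum_sum_layerDensity_add_le hcard
    (fun H hH => sum_sum_layerDensity_le s hH) (IsCrossDependent.comap hcross Fin.valEmbedding)
  simp only [Fintype.card_fin] at hbound
  simp only [fun i => phi_eq_layerDensity (hsub i)]
  linarith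

theorem stmt_2 (n r s : ℕ) (hr : r ≤ n) (F : Fin s → Finset (Finset ℕ))
    (hsub : ∀ i, ∀ A ∈ F i, A ⊆ Finset.range n)
    (hcross : CrossDep F)
    (k : Fin s → ℕ) (hk : (∑ i, k i) + r = n) :
    ∑ j ∈ Finset.range (r + 1), ∑ i, phi n (F i) (k i + j) ≤
      ((r : ℝ) + 1) * ((s : ℝ) - 1) :=
  stmt_2_general n r s F hsub hcross k hk
end

section
/- (Kleitman Inequality.) Let F_1, …, F_s ⊆ 2^[n] be cross-dependent families and let k_1, …, k_s be nonnegative integers satisfying k_1 + … + k_s = n. Then Σ_{i=1}^{s} φ_i(k_i) ≤ s−1. -/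
/-! Choose pairwise disjoint blocks `I i ⊆ [n]` with `|I i| = k i`. For a uniformly random
permutation `σ` of `[n]`, each `σ(I i)` is a uniformly random `k i`-set, so `φ_i(k_i)` is the
probability that `σ(I i) ∈ F i`. The sets `σ(I i)` are pairwise disjoint, so by cross-dependence
at most `s - 1` of these events happen for any `σ`; averaging over `σ` gives the bound. -/

open Finset

open Equiv Nat Function
open scoped Pointwise

section
variable {α : Type*} [DecidableEq α]

theorem Finset.exists_perm_smul_eq {B B' : Finset α} (h : #B = #B') :
    ∃ τ : Perm α, τ • B = B' := by
  have := Set.powersetCard.isPretransitive (α := α) (n := #B')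
  obtain ⟨τ, hτ⟩ := MulAction.exists_smul_eq (Perm α)
    (⟨B, h⟩ : Set.powersetCard α #B') ⟨B', rfl⟩
  exact ⟨τ, by simpa using congrArg Subtype.val hτ⟩

variable [Fintype α]

theorem card_filter_perm_smul_eq_congr (I : Finset α) {B B' : Finset α} (h : #B = #B') :
    #{σ : Perm α | σ • I = B} = #{σ : Perm α | σ • I = B'} := by
  obtain ⟨τ, rfl⟩ := Finset.exists_perm_smul_eq h
  refine card_equiv (Equiv.mulLeft τ) fun σ => ?_
  simp only [mem_filter_univ, coe_mulLeft, mul_smul]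
  exact (MulAction.injective τ).eq_iff.symm

theorem card_filter_perm_smul_eq_mul_choose (I : Finset α) {B : Finset α} (h : #B = #I) :
    #{σ : Perm α | σ • I = B} * (Fintype.card α).choose #I = (Fintype.card α)! := by
  have hfib : #(univ : Finset (Perm α))
      = ∑ B' ∈ powersetCard #I univ, #{σ : Perm α | σ • I = B'} :=
    card_eq_sum_card_fiberwise fun σ _ => by simp [card_smul_finset]
  rw [sum_congr rfl fun B' hB' => card_filter_perm_smul_eq_congr I
    ((mem_powersetCard.1 hB').2.trans h.symm), sum_const, card_powersetCard, Finset.card_univ,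
    Finset.card_univ, Fintype.card_perm] at hfib
  rw [hfib, smul_eq_mul, mul_comm]

theorem card_filter_perm_smul_mem_mul_choose (I : Finset α) (G : Finset (Finset α)) :
    #{σ : Perm α | σ • I ∈ G} * (Fintype.card α).choose #I
      = #{B ∈ G | #B = #I} * (Fintype.card α)! := by
  rw [card_eq_sum_card_fiberwise (t := {B ∈ G | #B = #I}) (f := fun σ : Perm α => σ • I)
    fun σ hσ => by simp_all [card_smul_finset], sum_mul, ← smul_eq_mul, ← sum_const]
  refine sum_congr rfl fun B hB => ?_
  rw [mem_filter] at hB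
  rw [← card_filter_perm_smul_eq_mul_choose I hB.2, filter_filter]
  congr 2
  ext σ
  simp only [mem_filter_univ]
  exact ⟨And.right, fun h => ⟨h ▸ hB.1, h⟩⟩

end

theorem Finset.exists_pairwise_disjoint_card_eq {α ι : Type*} [Fintype α] [Fintype ι]
    (k : ι → ℕ) (hk : ∑ i, k i ≤ Fintype.card α) :
    ∃ I : ι → Finset α, (∀ i, #(I i) = k i) ∧ Pairwise (Disjoint on I) := by
  obtain ⟨e⟩ : Nonempty ((Σ i, Fin (k i)) ↪ α) :=
    Embedding.nonempty_of_card_le (by simpa using hk)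
  refine ⟨fun i => univ.map ((Embedding.sigmaMk i).trans e), fun i => by simp,
    fun i j hij => ?_⟩
  simp only [onFun, disjoint_left, mem_map]
  rintro _ ⟨x, -, rfl⟩ ⟨y, -, hxy⟩
  exact hij (congrArg Sigma.fst (e.injective hxy)).symm

theorem Finset.card_filter_lt_of_not_forall {ι : Type*} [Fintype ι] {p : ι → Prop}
    [DecidablePred p] (h : ¬ ∀ i, p i) : #{i | p i} < Fintype.card ι := by
  obtain ⟨i, hi⟩ := not_forall.1 h
  exact card_lt_card (filter_ssubset.2 ⟨i, mem_univ i, hi⟩)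

theorem Finset.sum_card_filter_comm {ι κ : Type*} [Fintype ι] [Fintype κ]
    (p : ι → κ → Prop) [∀ i j, Decidable (p i j)] :
    ∑ i, #{j | p i j} = ∑ j, #{i | p i j} := by
  simp only [card_filter]
  exact sum_comm

theorem sum_card_filter_card_div_choose_le {α ι : Type*} [Fintype α] [DecidableEq α]
    [Fintype ι] (F : ι → Finset (Finset α))
    (hF : ¬ ∃ f : ι → Finset α, (∀ i, f i ∈ F i) ∧ Pairwise (Disjoint on f))
    (k : ι → ℕ) (hk : ∑ i, k i ≤ Fintype.card α) :
    ∑ i, (#{A ∈ F i | #A = k i} : ℝ) / (Fintype.card α).choose (k i)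
      ≤ Fintype.card ι - 1 := by
  obtain ⟨I, hIcard, hIdisj⟩ := exists_pairwise_disjoint_card_eq k hk
  set N := Fintype.card α
  have hN : (0 : ℝ) < N ! := by positivity
  have hdensity : ∀ i, (#{A ∈ F i | #A = k i} : ℝ) / N.choose (k i)
      = #{σ : Perm α | σ • I i ∈ F i} / N ! := by
    intro i
    have hki : k i ≤ N := (single_le_sum (fun j _ => Nat.zero_le (k j)) (mem_univ i)).trans hk
    rw [div_eq_div_iff (by exact_mod_cast (Nat.choose_pos hki).ne') hN.ne']
    exact_mod_cast (hIcard i ▸ card_filter_perm_smul_mem_mul_choose (I i) (F i)).symm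
  have hfew : ∀ σ : Perm α, (#{i | σ • I i ∈ F i} : ℝ) ≤ Fintype.card ι - 1 := by
    intro σ
    have hlt : #{i | σ • I i ∈ F i} < Fintype.card ι :=
      card_filter_lt_of_not_forall fun hmem => hF ⟨fun i => σ • I i, hmem, fun i j hij => by
        change Disjoint (σ • I i) (σ • I j)
        rw [← disjoint_coe, coe_smul_finset, coe_smul_finset, Set.disjoint_smul_set]
        exact disjoint_coe.2 (hIdisj hij)⟩
    exact le_sub_iff_add_le.2 (by exact_mod_cast hlt)
  calc ∑ i, (#{A ∈ F i | #A = k i} : ℝ) / N.choose (k i)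
      = (∑ σ : Perm α, (#{i | σ • I i ∈ F i} : ℝ)) / N ! := by
        rw [sum_congr rfl fun i _ => hdensity i, ← sum_div]
        exact_mod_cast congrArg (fun m : ℕ => (m : ℝ) / N !)
          (sum_card_filter_comm fun i (σ : Perm α) => σ • I i ∈ F i)
    _ ≤ (∑ _σ : Perm α, ((Fintype.card ι : ℝ) - 1)) / N ! := by
        gcongr with σ
        exact hfew σ
    _ = Fintype.card ι - 1 := by
        rw [sum_const, Finset.card_univ, Fintype.card_perm, nsmul_eq_mul]
        exact mul_div_cancel_left₀ _ hN.ne'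

theorem card_filter_map_mem_card_eq {α β : Type*} [Fintype α] [DecidableEq β] (e : α ↪ β)
    (G : Finset (Finset β)) (hG : ∀ B ∈ G, B ⊆ univ.map e) (ℓ : ℕ) :
    #{A : Finset α | A.map e ∈ G ∧ #A = ℓ} = #{B ∈ G | #B = ℓ} := by
  refine card_nbij (fun A => A.map e) (fun A hA => ?_) (fun A _ B _ => (map_inj (f := e)).1)
    fun B hB => ?_
  · simpa using hA
  · rw [coe_filter] at hB
    obtain ⟨A, -, rfl⟩ := subset_map_iff.1 (hG B hB.1)
    exact ⟨A, by simpa using hB, rfl⟩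

theorem stmt_3 (n s : ℕ) (F : Fin s → Finset (Finset ℕ))
    (hsub : ∀ i, ∀ A ∈ F i, A ⊆ Finset.range n)
    (hcross : CrossDep F)
    (k : Fin s → ℕ) (hk : ∑ i, k i = n) :
    ∑ i, phi n (F i) (k i) ≤ (s : ℝ) - 1 := by
  have hsub' : ∀ i, ∀ A ∈ F i, A ⊆ (univ : Finset (Fin n)).map Fin.valEmbedding := by
    simpa [← Nat.Iio_eq_range] using hsub
  have key := sum_card_filter_card_div_choose_le
    (fun i => ({A | A.map Fin.valEmbedding ∈ F i} : Finset (Finset (Fin n))))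
    (fun ⟨f, hf, hdisj⟩ => hcross ⟨fun i => (f i).map Fin.valEmbedding,
      fun i => (mem_filter_univ (f i)).1 (hf i), fun i j hij => (disjoint_map _).2 (hdisj hij)⟩)
    k (by simp [hk])
  simp only [filter_filter, card_filter_map_mem_card_eq _ _ (hsub' _), Fintype.card_fin] at key
  simpa only [phi] using key
end

section
/- Let 1 ≤ k ≤ n, let Y ⊆ [n] with |Y| = k, and let j_1, …, j_s be integers with 0 ≤ j_i ≤ k and j_1 + … + j_s = k + 1. Define G_i = {G ⊆ [n] : |G ∩ Y| ≥ j_i}. Then (a) the families G_1, …, G_s are cross-dependent, (b) ρ_n(G_i) = (k + 1 − j_i)/(k + 1) for each i, and (c) Σ_{i=1}^{s} ρ_n(G_i) = s − 1. -/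
open Finset

/-- The relative measure `ρₙ(F) = ‖F‖ₙ / (n + 1)`. -/
noncomputable def rho (n : ℕ) (F : Finset (Finset ℕ)) : ℝ :=
  binNorm n F / ((n : ℝ) + 1)

/-! Split `A ⊆ [n]` as `B ∪ C` with `B ⊆ Y` and `C ⊆ [n] \ Y`. The sets with `|B| = b` contribute
`C(k,b) ∑_c C(n-k,c) / C(n,b+c) = (n+1)/(k+1)` to the binomial norm: the hypergeometric symmetry
`C(n,k) C(k,b) C(n-k,c) = C(n,b+c) C(b+c,b) C(n-b-c,k-b)` turns the sum into an upper
Chu–Vandermonde sum `∑_c C(b+c,b) C(n-b-c,k-b) = C(n+1,k+1)`. So under `ρₙ` the size of `A ∩ Y`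
is uniform on `{0,…,k}`, which gives (b) and (c). For (a), pairwise disjoint sets meet `Y` in at
most `k` points altogether, while the thresholds `j_i` add up to `k + 1`. -/

theorem Ring.choose_neg_natCast_succ (p c : ℕ) :
    Ring.choose (-((p : ℤ) + 1)) c = (-1) ^ c * ((p + c).choose p : ℤ) := by
  rw [Ring.choose_neg, show (p : ℤ) + 1 + c - 1 = ((p + c : ℕ) : ℤ) by push_cast; ring,
    Ring.choose_natCast, Nat.choose_symm_add, Units.smul_def, Int.coe_negOnePow_natCast,
    smul_eq_mul]

theorem Nat.sum_antidiagonal_add_choose_mul_add_choose (p q m : ℕ) :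
    ∑ ce ∈ antidiagonal m, (p + ce.1).choose p * (q + ce.2).choose q =
      (p + q + 1 + m).choose (p + q + 1) := by
  -- Chu–Vandermonde at the negative arguments `-(p + 1)` and `-(q + 1)`.
  have h := Ring.add_choose_eq (R := ℤ) (r := -((p : ℤ) + 1)) (s := -((q : ℤ) + 1)) m
    (Commute.all _ _)
  rw [show -((p : ℤ) + 1) + -((q : ℤ) + 1) = -(((p + q + 1 : ℕ) : ℤ) + 1) by push_cast; ring,
    Ring.choose_neg_natCast_succ] at h
  simp only [Ring.choose_neg_natCast_succ] at h
  have hsign : ∀ ce ∈ antidiagonal m, (-1 : ℤ) ^ ce.1 * ((p + ce.1).choose p : ℤ) *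
      ((-1) ^ ce.2 * ((q + ce.2).choose q : ℤ)) =
      (-1) ^ m * ((p + ce.1).choose p * (q + ce.2).choose q : ℕ) := by
    intro ce hce
    rw [← HasAntidiagonal.mem_antidiagonal.1 hce]
    push_cast
    ring
  rw [sum_congr rfl hsign, ← mul_sum] at h
  exact_mod_cast (mul_right_injective₀ (pow_ne_zero m (by norm_num : (-1 : ℤ) ≠ 0)) h).symm

theorem Nat.cast_choose_mul_choose_mul_choose_comm (K : Type*) [Field K] [CharZero K]
    (b c d e : ℕ) :
    ((b + d + (c + e)).choose (b + d) * (b + d).choose b * (c + e).choose c : K) =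
      (b + c + (d + e)).choose (b + c) * (b + c).choose b * (d + e).choose d := by
  simp only [Nat.cast_add_choose]
  rw [add_add_add_comm b d c e]
  field_simp [Nat.cast_ne_zero, Nat.factorial_ne_zero]

theorem choose_mul_sum_choose_div_choose {b k n : ℕ} (hbk : b ≤ k) (hkn : k ≤ n) :
    (k.choose b : ℝ) * ∑ c ∈ range (n - k + 1), ((n - k).choose c : ℝ) / n.choose (b + c) =
      (n + 1) / (k + 1) := by
  obtain ⟨d, rfl⟩ := Nat.exists_eq_add_of_le hbk
  obtain ⟨m, rfl⟩ := Nat.exists_eq_add_of_le hkn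
  have hchoose {N i : ℕ} (h : i ≤ N) : (N.choose i : ℝ) ≠ 0 :=
    Nat.cast_ne_zero.2 (Nat.choose_ne_zero h)
  have hterm : ∀ ce ∈ antidiagonal m,
      ((b + d).choose b : ℝ) * (m.choose ce.1 / (b + d + m).choose (b + ce.1)) =
        ((b + ce.1).choose b * (d + ce.2).choose d : ℕ) / (b + d + m).choose (b + d) := by
    rintro ⟨c, e⟩ hce
    rw [HasAntidiagonal.mem_antidiagonal] at hce
    subst hce
    have hcomm := Nat.cast_choose_mul_choose_mul_choose_comm ℝ b c d e
    rw [add_add_add_comm b c d e] at hcomm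
    rw [mul_div_assoc', div_eq_div_iff (hchoose (by omega)) (hchoose (by omega))]
    push_cast
    linear_combination hcomm
  rw [Nat.add_sub_cancel_left, mul_sum, ← Nat.sum_antidiagonal_eq_sum_range_succ_mk
    (fun ce => ((b + d).choose b : ℝ) * (m.choose ce.1 / (b + d + m).choose (b + ce.1))),
    sum_congr rfl hterm, ← sum_div, ← Nat.cast_sum,
    Nat.sum_antidiagonal_add_choose_mul_add_choose,
    div_eq_div_iff (hchoose (by omega)) (by positivity), add_right_comm _ 1 m]
  exact_mod_cast (Nat.add_one_mul_choose_eq (b + d + m) (b + d)).symm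

theorem Finset.sum_powerset_eq_sum_card_inter_card_sdiff {α M : Type*} [DecidableEq α]
    [AddCommMonoid M] {S Y : Finset α} (hY : Y ⊆ S) (g : ℕ → ℕ → M) :
    ∑ A ∈ S.powerset, g #(A ∩ Y) #(A \ Y) =
      ∑ b ∈ range (#Y + 1), ∑ c ∈ range (#S - #Y + 1),
        ((#Y).choose b * (#S - #Y).choose c) • g b c := by
  have hsplit : ∑ A ∈ S.powerset, g #(A ∩ Y) #(A \ Y) =
      ∑ B ∈ Y.powerset, ∑ C ∈ (S \ Y).powerset, g #B #C := by
    rw [← sum_product']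
    refine sum_nbij' (fun A => (A ∩ Y, A \ Y)) (fun BC => BC.1 ∪ BC.2) ?_ ?_ ?_ ?_ ?_
    · intro A hA
      simp only [mem_powerset, mem_product] at hA ⊢
      exact ⟨inter_subset_right, sdiff_subset_sdiff hA subset_rfl⟩
    · rintro ⟨B, C⟩ hBC
      simp only [mem_powerset, mem_product] at hBC ⊢
      exact union_subset (hBC.1.trans hY) (hBC.2.trans sdiff_subset)
    · intro A _
      exact (union_comm _ _).trans (sdiff_union_inter A Y)
    · rintro ⟨B, C⟩ hBC
      simp only [mem_powerset, mem_product, subset_iff, mem_sdiff] at hBC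
      refine Prod.ext ?_ ?_ <;> ext x <;> simp only [mem_inter, mem_union, mem_sdiff] <;> grind
    · intro A _
      rfl
  rw [hsplit, ← card_sdiff_of_subset hY]
  simp only [sum_powerset_apply_card (g _)]
  rw [sum_powerset_apply_card
    (fun b => ∑ c ∈ range (#(S \ Y) + 1), (#(S \ Y)).choose c • g b c)]
  simp only [smul_sum, mul_smul]

theorem binNorm_filter_le_card_inter {S Y : Finset ℕ} (hY : Y ⊆ S) {j : ℕ} (hj : j ≤ #Y + 1) :
    binNorm #S {A ∈ S.powerset | j ≤ #(A ∩ Y)} = (#S + 1) * (#Y + 1 - j) / (#Y + 1) := by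
  set g : ℕ → ℕ → ℝ := fun b c => if j ≤ b then 1 / ((#S).choose (b + c) : ℝ) else 0
  have hsplit : ∀ A ∈ S.powerset,
      (if j ≤ #(A ∩ Y) then 1 / ((#S).choose #A : ℝ) else 0) = g #(A ∩ Y) #(A \ Y) :=
    fun A _ => by rw [← card_inter_add_card_sdiff A Y]
  have hlayer : ∀ b ∈ range (#Y + 1),
      ∑ c ∈ range (#S - #Y + 1), ((#Y).choose b * (#S - #Y).choose c) • g b c =
        if j ≤ b then ((#S : ℝ) + 1) / (#Y + 1) else 0 := by
    intro b hb
    split_ifs with hjb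
    · rw [← choose_mul_sum_choose_div_choose (mem_range_succ_iff.1 hb) (card_le_card hY),
        mul_sum]
      refine sum_congr rfl fun c _ => ?_
      simp only [g, hjb, if_true, nsmul_eq_mul]
      push_cast
      ring
    · simp [g, hjb]
  rw [binNorm, sum_filter, sum_congr rfl hsplit, sum_powerset_eq_sum_card_inter_card_sdiff hY,
    sum_congr rfl hlayer, ← sum_filter, sum_const, range_eq_Ico, Ico_filter_le, Nat.card_Ico,
    max_eq_right (Nat.zero_le j), nsmul_eq_mul, Nat.cast_sub hj]
  push_cast
  ring

theorem rho_filter_le_card_inter {S Y : Finset ℕ} (hY : Y ⊆ S) {j : ℕ} (hj : j ≤ #Y + 1) :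
    rho #S {A ∈ S.powerset | j ≤ #(A ∩ Y)} = (#Y + 1 - j) / (#Y + 1) := by
  rw [rho, binNorm_filter_le_card_inter hY hj]
  field_simp

theorem crossDep_of_card_lt_sum {s : ℕ} {F : Fin s → Finset (Finset ℕ)} (Y : Finset ℕ)
    (j : Fin s → ℕ) (hF : ∀ i, ∀ A ∈ F i, j i ≤ #(A ∩ Y)) (hY : #Y < ∑ i, j i) :
    CrossDep F := by
  rintro ⟨f, hf, hdisj⟩
  have hsum : ∑ i, #(f i ∩ Y) ≤ #Y := by
    rw [← card_biUnion fun i _ i' _ h => (hdisj h).mono inter_subset_left inter_subset_left]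
    exact card_le_card (biUnion_subset.2 fun i _ => inter_subset_right)
  have hle := sum_le_sum fun i (_ : i ∈ univ) => hF i (f i) (hf i)
  omega

theorem stmt_4_general (n k s : ℕ)
    (Y : Finset ℕ) (hY : Y ⊆ Finset.range n) (hYcard : Y.card = k)
    (j : Fin s → ℕ) (hjsum : ∑ i, j i = k + 1)
    (G : Fin s → Finset (Finset ℕ))
    (hG : ∀ i, G i = (Finset.range n).powerset.filter
        fun A => j i ≤ (A ∩ Y).card) :
    CrossDep G ∧
    (∀ i, rho n (G i) = ((k : ℝ) + 1 - (j i : ℝ)) / ((k : ℝ) + 1)) ∧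
    ∑ i, rho n (G i) = (s : ℝ) - 1 := by
  have hrho : ∀ i, rho n (G i) = ((k : ℝ) + 1 - (j i : ℝ)) / ((k : ℝ) + 1) := by
    intro i
    have hji : j i ≤ #Y + 1 := by
      rw [hYcard, ← hjsum]
      exact single_le_sum (fun _ _ => Nat.zero_le _) (mem_univ i)
    simpa [hG, hYcard] using rho_filter_le_card_inter hY hji
  refine ⟨crossDep_of_card_lt_sum Y j (fun i A hA => ?_) (by omega), hrho, ?_⟩
  · rw [hG, mem_filter] at hA
    exact hA.2
  · rw [sum_congr rfl fun i _ => hrho i, ← sum_div, sum_sub_distrib, sum_const, card_univ,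
      Fintype.card_fin, ← Nat.cast_sum, hjsum]
    field_simp
    push_cast
    ring

theorem stmt_4 (n k s : ℕ) (hk1 : 1 ≤ k) (hkn : k ≤ n)
    (Y : Finset ℕ) (hY : Y ⊆ Finset.range n) (hYcard : Y.card = k)
    (j : Fin s → ℕ) (hj : ∀ i, j i ≤ k) (hjsum : ∑ i, j i = k + 1)
    (G : Fin s → Finset (Finset ℕ))
    (hG : ∀ i, G i = (Finset.range n).powerset.filter
        fun A => j i ≤ (A ∩ Y).card) :
    CrossDep G ∧
    (∀ i, rho n (G i) = ((k : ℝ) + 1 - (j i : ℝ)) / ((k : ℝ) + 1)) ∧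
    ∑ i, rho n (G i) = (s : ℝ) - 1 :=
  stmt_4_general n k s Y hY hYcard j hjsum G hG
end

section
/- Let F ⊆ 2^[n] with ∅ ∈ F and [n] ∉ F. Then ‖∂F‖_n ≥ 1, where ∂F is the outer boundary of F. -/
open Finset

/-- The outer boundary of `F` inside `2^[n]`:
`∂F = {G ⊆ [n] : G ∉ F, ∃ A ∈ F, |A ∆ G| = 1}`. -/
def outerBoundary (n : ℕ) (F : Finset (Finset ℕ)) : Finset (Finset ℕ) :=
  (Finset.range n).powerset.filter fun G =>
    G ∉ F ∧ ∃ A ∈ F, (symmDiff A G).card = 1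


def chainA (n k : ℕ) : Finset (Fin n) := univ.filter fun i => (i : ℕ) < k

def chainSet (n : ℕ) (σ : Equiv.Perm (Fin n)) (k : ℕ) : Finset ℕ :=
  (chainA n k).image fun i => ((σ i : Fin n) : ℕ)

lemma chainA_card {n k : ℕ} (h : k ≤ n) : (chainA n k).card = k := by
  classical
  have : (chainA n k).image Fin.val = Finset.range k := by
    ext m
    simp only [chainA, mem_image, mem_filter, mem_univ, true_and, mem_range]
    constructor
    · rintro ⟨i, hi, rfl⟩; exact hi
    · intro hm; exact ⟨⟨m, lt_of_lt_of_le hm h⟩, hm, rfl⟩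
  calc (chainA n k).card = ((chainA n k).image Fin.val).card :=
        (Finset.card_image_of_injective _ Fin.val_injective).symm
    _ = k := by rw [this, Finset.card_range]

lemma chainSet_card {n k : ℕ} (σ : Equiv.Perm (Fin n)) (h : k ≤ n) :
    (chainSet n σ k).card = k := by
  rw [chainSet, Finset.card_image_of_injective _
    (show Function.Injective (fun i => ((σ i : Fin n) : ℕ)) from
      fun a b hab => σ.injective (Fin.val_injective hab)), chainA_card h]

lemma chainSet_zero (n : ℕ) (σ : Equiv.Perm (Fin n)) : chainSet n σ 0 = ∅ := by
  simp [chainSet, chainA]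

lemma chainSet_top (n : ℕ) (σ : Equiv.Perm (Fin n)) : chainSet n σ n = Finset.range n := by
  ext m
  simp only [chainSet, chainA, mem_image, mem_filter, mem_univ, true_and, mem_range]
  constructor
  · rintro ⟨i, _, rfl⟩; exact (σ i).isLt
  · intro hm; exact ⟨σ.symm ⟨m, hm⟩, (σ.symm ⟨m, hm⟩).isLt, by simp⟩

lemma chainSet_subset_range (n : ℕ) (σ : Equiv.Perm (Fin n)) (k : ℕ) :
    chainSet n σ k ⊆ Finset.range n := by
  intro m hm
  simp only [chainSet, mem_image] at hm
  obtain ⟨i, _, rfl⟩ := hm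
  exact mem_range.2 (σ i).isLt

lemma chainSet_succ {n k : ℕ} (σ : Equiv.Perm (Fin n)) (hk : k < n) :
    chainSet n σ (k + 1) = insert ((σ ⟨k, hk⟩ : Fin n) : ℕ) (chainSet n σ k) := by
  have hA : chainA n (k + 1) = insert ⟨k, hk⟩ (chainA n k) := by
    ext i
    simp only [chainA, mem_filter, mem_univ, true_and, mem_insert, Nat.lt_succ_iff_lt_or_eq,
      Fin.ext_iff]
    tauto
  rw [chainSet, hA, Finset.image_insert]; rfl

lemma chainSet_not_mem {n k : ℕ} (σ : Equiv.Perm (Fin n)) (hk : k < n) :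
    ((σ ⟨k, hk⟩ : Fin n) : ℕ) ∉ chainSet n σ k := by
  simp only [chainSet, mem_image, not_exists]
  rintro i ⟨hi, h⟩
  have : i = ⟨k, hk⟩ := σ.injective (Fin.val_injective h)
  subst this
  simp [chainA] at hi
open Classical in
noncomputable def exitIdx (n : ℕ) (F : Finset (Finset ℕ)) (σ : Equiv.Perm (Fin n)) : ℕ :=
  if h : ∃ k, chainSet n σ k ∉ F then Nat.find h else 0

noncomputable def exitSet (n : ℕ) (F : Finset (Finset ℕ)) (σ : Equiv.Perm (Fin n)) : Finset ℕ :=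
  chainSet n σ (exitIdx n F σ)

section
variable {n : ℕ} {F : Finset (Finset ℕ)} (σ : Equiv.Perm (Fin n))
  (hbot : ∅ ∈ F) (htop : Finset.range n ∉ F)

include htop in
lemma exit_ex : ∃ k, chainSet n σ k ∉ F := ⟨n, by rw [chainSet_top]; exact htop⟩

include htop in
lemma exitIdx_le : exitIdx n F σ ≤ n := by
  rw [exitIdx, dif_pos (exit_ex σ htop)]
  exact Nat.find_le (by rw [chainSet_top]; exact htop)

include hbot htop in
lemma exitIdx_pos : 0 < exitIdx n F σ := by
  rw [exitIdx, dif_pos (exit_ex σ htop)]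
  rcases Nat.eq_zero_or_pos (Nat.find (exit_ex σ htop)) with h | h
  · exact absurd (Nat.find_spec (exit_ex σ htop)) (by rw [h, chainSet_zero]; simp [hbot])
  · exact h

include htop in
lemma exitSet_card : (exitSet n F σ).card = exitIdx n F σ :=
  chainSet_card σ (exitIdx_le σ htop)

include hbot htop in
lemma exitSet_mem_boundary : exitSet n F σ ∈ outerBoundary n F := by
  have hex := exit_ex σ htop
  have hid : exitIdx n F σ = Nat.find hex := dif_pos hex
  have hnotF : exitSet n F σ ∉ F := by rw [exitSet, hid]; exact Nat.find_spec hex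
  obtain ⟨m, hm⟩ : ∃ m, exitIdx n F σ = m + 1 :=
    ⟨exitIdx n F σ - 1, (Nat.succ_pred_eq_of_pos (exitIdx_pos σ hbot htop)).symm⟩
  have hmn : m < n := by have := exitIdx_le σ htop; omega
  have hmem : chainSet n σ m ∈ F := by
    by_contra hc
    have h1 : Nat.find hex ≤ m := Nat.find_le hc
    rw [← hid, hm] at h1
    omega
  refine mem_filter.2 ⟨mem_powerset.2 (chainSet_subset_range n σ _), hnotF, chainSet n σ m, hmem, ?_⟩
  have hsub : chainSet n σ m ⊆ exitSet n F σ := by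
    rw [exitSet, hm, chainSet_succ σ hmn]; exact subset_insert _ _
  rw [symmDiff_of_le hsub, card_sdiff_of_subset hsub, exitSet_card σ htop, hm,
    chainSet_card σ (le_of_lt hmn)]
  omega

end
lemma count_chain (n k : ℕ) (hk : k ≤ n) (G : Finset ℕ) (hG : G ⊆ Finset.range n)
    (hGc : G.card = k) :
    ((univ : Finset (Equiv.Perm (Fin n))).filter fun σ => chainSet n σ k = G).card ≤
      k.factorial * (n - k).factorial := by
  classical
  set A := chainA n k with hA
  set Gf : Finset (Fin n) := univ.filter fun i => (i : ℕ) ∈ G with hGfdef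
  have hGfim : Gf.image Fin.val = G := by
    ext m
    simp only [hGfdef, mem_image, mem_filter, mem_univ, true_and]
    constructor
    · rintro ⟨i, hi, rfl⟩; exact hi
    · intro hm; exact ⟨⟨m, mem_range.1 (hG hm)⟩, hm, rfl⟩
  have hGfcard : Gf.card = k := by
    rw [← hGc, ← hGfim, Finset.card_image_of_injective _ Fin.val_injective]
  set S := (univ : Finset (Equiv.Perm (Fin n))).filter fun σ => chainSet n σ k = G with hS
  have himage : ∀ σ ∈ S, A.image σ = Gf := by
    intro σ hσ
    have h1 : (A.image σ).image Fin.val = Gf.image Fin.val := by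
      rw [hGfim, Finset.image_image]
      exact (mem_filter.1 hσ).2
    exact Finset.image_injective Fin.val_injective h1
  have himagec : ∀ σ ∈ S, Aᶜ.image σ = Gfᶜ := by
    intro σ hσ
    rw [Finset.compl_eq_univ_sdiff, Finset.image_sdiff _ _ σ.injective,
      Finset.image_univ_equiv σ, himage σ hσ, ← Finset.compl_eq_univ_sdiff]
  -- injection into embeddings
  have key : S.card ≤ Fintype.card ((↥A ↪ ↥Gf) × (↥(Aᶜ) ↪ ↥(Gfᶜ))) := by
    rw [← Fintype.card_coe S]
    refine Fintype.card_le_of_injective (fun σ =>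
      (⟨⟨fun i => ⟨σ.1 (i : Fin n), by
          have := himage σ.1 σ.2
          exact this ▸ Finset.mem_image_of_mem _ i.2⟩,
        fun a b hab => Subtype.ext (σ.1.injective (congrArg Subtype.val hab))⟩,
       ⟨fun i => ⟨σ.1 (i : Fin n), by
          have := himagec σ.1 σ.2
          exact this ▸ Finset.mem_image_of_mem _ i.2⟩,
        fun a b hab => Subtype.ext (σ.1.injective (congrArg Subtype.val hab))⟩⟩)) ?_
    rintro ⟨σ, hσ⟩ ⟨τ, hτ⟩ h
    simp only [Prod.mk.injEq] at h
    obtain ⟨h1, h2⟩ := h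
    refine Subtype.ext (Equiv.ext fun i => ?_)
    by_cases hi : i ∈ A
    · have := congrFun (congrArg DFunLike.coe h1) ⟨i, hi⟩
      exact congrArg Subtype.val this
    · have := congrFun (congrArg DFunLike.coe h2) ⟨i, by simpa using hi⟩
      exact congrArg Subtype.val this
  have hAcard : A.card = k := chainA_card hk
  have hAc : (Aᶜ).card = n - k := by
    rw [Finset.card_compl, hAcard, Fintype.card_fin]
  have hGfc : (Gfᶜ).card = n - k := by
    rw [Finset.card_compl, hGfcard, Fintype.card_fin]
  calc S.card ≤ Fintype.card ((↥A ↪ ↥Gf) × (↥(Aᶜ) ↪ ↥(Gfᶜ))) := key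
    _ = k.factorial * (n - k).factorial := by
        rw [Fintype.card_prod, Fintype.card_embedding_eq, Fintype.card_embedding_eq,
          Fintype.card_coe, Fintype.card_coe, Fintype.card_coe, Fintype.card_coe,
          hAcard, hAc, hGfcard, hGfc, Nat.descFactorial_self, Nat.descFactorial_self]

theorem stmt_10 (n : ℕ) (F : Finset (Finset ℕ))
    (hsub : ∀ A ∈ F, A ⊆ Finset.range n)
    (hbot : ∅ ∈ F) (htop : Finset.range n ∉ F) :
    1 ≤ binNorm n (outerBoundary n F) := by
  classical
  have hfib : (univ : Finset (Equiv.Perm (Fin n))).card =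
      ∑ G ∈ outerBoundary n F, ((univ.filter fun σ => exitSet n F σ = G).card) :=
    Finset.card_eq_sum_card_fiberwise fun σ _ => exitSet_mem_boundary σ hbot htop
  have hcardP : (univ : Finset (Equiv.Perm (Fin n))).card = n.factorial := by
    rw [Finset.card_univ, Fintype.card_perm, Fintype.card_fin]
  have hbound : ∀ G ∈ outerBoundary n F,
      ((univ : Finset (Equiv.Perm (Fin n))).filter fun σ => exitSet n F σ = G).card ≤
        (G.card).factorial * (n - G.card).factorial := by
    intro G hG
    have hGsub : G ⊆ Finset.range n := mem_powerset.1 (mem_filter.1 hG).1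
    have hkn : G.card ≤ n := by
      simpa using Finset.card_le_card hGsub
    refine le_trans (Finset.card_le_card ?_) (count_chain n G.card hkn G hGsub rfl)
    intro σ hσ
    simp only [mem_filter, mem_univ, true_and] at hσ ⊢
    have h1 : exitIdx n F σ = G.card := by rw [← hσ, exitSet_card σ htop]
    rw [← h1]
    exact hσ
  have hsum : n.factorial ≤ ∑ G ∈ outerBoundary n F,
      (G.card).factorial * (n - G.card).factorial := by
    rw [← hcardP, hfib]
    exact Finset.sum_le_sum hbound
  have hfacpos : (0 : ℝ) < (n.factorial : ℝ) := by
    exact_mod_cast n.factorial_pos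
  rw [binNorm]
  have h1 : ∀ G ∈ outerBoundary n F, (1 : ℝ) / (n.choose G.card : ℝ) =
      (((G.card).factorial * (n - G.card).factorial : ℕ) : ℝ) / (n.factorial : ℝ) := by
    intro G hG
    have hGsub : G ⊆ Finset.range n := mem_powerset.1 (mem_filter.1 hG).1
    have hkn : G.card ≤ n := by simpa using Finset.card_le_card hGsub
    have hch : (n.choose G.card : ℝ) ≠ 0 :=
      Nat.cast_ne_zero.2 (Nat.choose_pos hkn).ne'
    rw [div_eq_div_iff hch hfacpos.ne', one_mul]
    have h2 : (G.card).factorial * (n - G.card).factorial * (n.choose G.card) = n.factorial := by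
      rw [← Nat.choose_mul_factorial_mul_factorial hkn]; ring
    exact_mod_cast (congrArg (Nat.cast (R := ℝ)) h2).symm
  rw [Finset.sum_congr rfl h1, ← Finset.sum_div]
  rw [le_div_iff₀ hfacpos, one_mul, ← Nat.cast_sum]
  exact_mod_cast hsum
end

section
/- (Binomial Katona Theorem, even case.) Let ℓ ≥ 0 be an integer with w = 2ℓ < n, and suppose F ⊆ 2^[n] is w-union. Then ‖F‖_n ≤ ℓ + 1. -/
/-!
Katona's permutation method. Call `A ⊆ [n]` a prefix of a permutation `σ` if it consists of the
first `|A|` entries of the list `σ 0, σ 1, …`, and a suffix if its complement is a prefix. By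
symmetry `A` is a prefix of exactly `n! / C(n, |A|)` permutations, and likewise a suffix, so
`2 · n! · ‖F‖ₙ` counts the pairs `(σ, A)` with `A ∈ F` a prefix or a suffix of `σ`.
Fix `σ`. The prefixes lying in `F` have pairwise distinct sizes, and so do the suffixes. A prefix
and a suffix from `F` cannot cover `[n]`, as their union has at most `w < n` elements, so they are
disjoint; hence the largest prefix and the largest suffix in `F` have sizes summing to at most
`w`, and `σ` contributes at most `w + 2` pairs. Therefore `‖F‖ₙ ≤ (w + 2) / 2`.
-/

open Finset

section Katona

variable {n : ℕ}

def initSeg (σ : Equiv.Perm (Fin n)) (k : ℕ) : Finset (Fin n) :=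
  {j | (σ.symm j : ℕ) < k}

lemma mem_initSeg {σ : Equiv.Perm (Fin n)} {k : ℕ} {j : Fin n} :
    j ∈ initSeg σ k ↔ (σ.symm j : ℕ) < k := by
  simp [initSeg]

lemma initSeg_mono (σ : Equiv.Perm (Fin n)) {k m : ℕ} (h : k ≤ m) :
    initSeg σ k ⊆ initSeg σ m := fun j hj => by
  rw [mem_initSeg] at hj ⊢; omega

lemma card_initSeg (σ : Equiv.Perm (Fin n)) {k : ℕ} (h : k ≤ n) :
    (initSeg σ k).card = k := by
  rw [← card_map σ.symm.toEmbedding]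
  have : (initSeg σ k).map σ.symm.toEmbedding = ({i | (i : ℕ) < k} : Finset (Fin n)) := by
    ext i; simp [mem_initSeg]
  rw [this, Fin.card_filter_val_lt, min_eq_right h]

lemma initSeg_mul (π σ : Equiv.Perm (Fin n)) (k : ℕ) :
    initSeg (π * σ) k = (initSeg σ k).map π.toEmbedding := by
  ext j
  simp [mem_initSeg, Equiv.Perm.mul_def]

lemma card_filter_initSeg_eq_of_card_eq (k : ℕ) {A B : Finset (Fin n)} (h : A.card = B.card) :
    #{σ : Equiv.Perm (Fin n) | initSeg σ k = A} = #{σ : Equiv.Perm (Fin n) | initSeg σ k = B} := by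
  obtain ⟨π, hπ⟩ := Equiv.Perm.exists_map_finset_eq A B h
  refine card_nbij' (π * ·) (π⁻¹ * ·) ?_ ?_ (fun σ _ => by group) (fun σ _ => by group)
  · intro σ hσ
    simp only [coe_filter, mem_univ, true_and, Set.mem_ofPred_eq] at hσ ⊢
    rw [initSeg_mul, hσ, hπ]
  · intro σ hσ
    simp only [coe_filter, mem_univ, true_and, Set.mem_ofPred_eq] at hσ ⊢
    rw [initSeg_mul, hσ, ← hπ, map_map]
    simp

lemma card_filter_initSeg_card_mul_choose (A : Finset (Fin n)) :
    #{σ : Equiv.Perm (Fin n) | initSeg σ A.card = A} * n.choose A.card = n.factorial := by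
  have hA : A.card ≤ n := by simpa using card_le_univ A
  have hfib := card_eq_sum_card_fiberwise (s := (univ : Finset (Equiv.Perm (Fin n))))
    (t := powersetCard A.card univ) (f := (initSeg · A.card))
    (fun σ _ => mem_powersetCard.2 ⟨subset_univ _, card_initSeg σ hA⟩)
  rw [sum_congr rfl fun B hB => card_filter_initSeg_eq_of_card_eq A.card
    (mem_powersetCard.1 hB).2, sum_const, card_powersetCard, card_univ, Fintype.card_perm,
    Fintype.card_fin, card_univ, Fintype.card_fin, smul_eq_mul] at hfib
  rw [hfib, mul_comm]

lemma card_filter_initSeg_card_eq (A : Finset (Fin n)) :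
    (#{σ : Equiv.Perm (Fin n) | initSeg σ A.card = A} : ℝ) = n.factorial / n.choose A.card := by
  have hA : A.card ≤ n := by simpa using card_le_univ A
  have hpos : (n.choose A.card : ℝ) ≠ 0 := by exact_mod_cast (Nat.choose_pos hA).ne'
  rw [eq_div_iff hpos]
  exact_mod_cast card_filter_initSeg_card_mul_choose A

lemma card_filter_initSeg_compl_eq (A : Finset (Fin n)) :
    (#{σ : Equiv.Perm (Fin n) | initSeg σ (n - A.card) = Aᶜ} : ℝ) =
      n.factorial / n.choose A.card := by
  have hA : A.card ≤ n := by simpa using card_le_univ A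
  have h := card_filter_initSeg_card_eq Aᶜ
  rwa [card_compl, Fintype.card_fin, Nat.choose_symm hA] at h

lemma factorial_mul_sum_one_div_choose (p : Equiv.Perm (Fin n) → Finset (Fin n) → Prop)
    [∀ σ A, Decidable (p σ A)]
    (hp : ∀ A, (#{σ | p σ A} : ℝ) = n.factorial / n.choose A.card) (G : Finset (Finset (Fin n))) :
    n.factorial * ∑ A ∈ G, 1 / (n.choose A.card : ℝ) = ∑ σ, (#{A ∈ G | p σ A} : ℝ) := by
  calc n.factorial * ∑ A ∈ G, 1 / (n.choose A.card : ℝ)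
      = ∑ A ∈ G, (#{σ | p σ A} : ℝ) := by
        rw [mul_sum]; exact sum_congr rfl fun A _ => by rw [hp]; ring
    _ = ∑ σ, (#{A ∈ G | p σ A} : ℝ) := by
        simp only [card_filter, Nat.cast_sum]; exact sum_comm

lemma disjoint_of_initSeg {σ : Equiv.Perm (Fin n)} {A B : Finset (Fin n)}
    (hA : initSeg σ A.card = A) (hB : initSeg σ (n - B.card) = Bᶜ) (hAB : (A ∪ B).card < n) :
    Disjoint A B := by
  rcases le_or_gt A.card (n - B.card) with hle | hlt
  · rw [← subset_compl_iff_disjoint_right, ← hA, ← hB]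
    exact initSeg_mono σ hle
  · have hcover : Bᶜ ⊆ A := by rw [← hA, ← hB]; exact initSeg_mono σ hlt.le
    have : A ∪ B = univ := eq_univ_of_forall fun x => by
      by_cases hx : x ∈ B
      · exact mem_union_right A hx
      · exact mem_union_left B (hcover (mem_compl.2 hx))
    simp [this] at hAB

lemma card_le_sup_card_add_one {α : Type*} {s : Finset (Finset α)}
    (h : Set.InjOn card (s : Set (Finset α))) :
    #s ≤ s.sup card + 1 := by
  simpa using card_le_card_of_injOn card
    (fun A hA => mem_range.2 (Nat.lt_succ_of_le (le_sup (f := card) hA))) h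

section UnionBound

variable {w : ℕ} {G : Finset (Finset (Fin n))}

lemma card_prefixes_add_card_suffixes_le (hw : w < n)
    (hG : ∀ A ∈ G, ∀ B ∈ G, (A ∪ B).card ≤ w) (σ : Equiv.Perm (Fin n)) :
    #{A ∈ G | initSeg σ A.card = A} + #{A ∈ G | initSeg σ (n - A.card) = Aᶜ} ≤ w + 2 := by
  set P := G.filter fun A => initSeg σ A.card = A
  set Q := G.filter fun A => initSeg σ (n - A.card) = Aᶜ
  have hP : #P ≤ P.sup card + 1 := card_le_sup_card_add_one fun A hA B hB hAB => by
    simp only [P, coe_filter, Set.mem_ofPred_eq] at hA hB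
    rw [← hA.2, ← hB.2, hAB]
  have hQ : #Q ≤ Q.sup card + 1 := card_le_sup_card_add_one fun A hA B hB hAB => by
    simp only [Q, coe_filter, Set.mem_ofPred_eq] at hA hB
    rw [← compl_inj_iff, ← hA.2, ← hB.2, hAB]
  have hQw : Q.sup card ≤ w := Finset.sup_le fun B hB => by
    have hB := (mem_filter.1 hB).1
    simpa using hG B hB B hB
  have hPQ : P.sup card ≤ w - Q.sup card := Finset.sup_le fun A hA => by
    obtain ⟨hAG, hApre⟩ := mem_filter.1 hA
    have hAw : A.card ≤ w := by simpa using hG A hAG A hAG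
    suffices Q.sup card ≤ w - A.card by omega
    refine Finset.sup_le fun B hB => ?_
    obtain ⟨hBG, hBsuf⟩ := mem_filter.1 hB
    have hunion := hG A hAG B hBG
    rw [card_union_of_disjoint (disjoint_of_initSeg hApre hBsuf (hunion.trans_lt hw))] at hunion
    omega
  omega

theorem sum_one_div_choose_le_of_card_union_le (hw : w < n)
    (hG : ∀ A ∈ G, ∀ B ∈ G, (A ∪ B).card ≤ w) :
    ∑ A ∈ G, 1 / (n.choose A.card : ℝ) ≤ (w + 2) / 2 := by
  have hpre := factorial_mul_sum_one_div_choose _ card_filter_initSeg_card_eq G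
  have hsuf := factorial_mul_sum_one_div_choose _ card_filter_initSeg_compl_eq G
  have hbound : ∑ σ : Equiv.Perm (Fin n), ((#{A ∈ G | initSeg σ A.card = A} : ℝ) +
      #{A ∈ G | initSeg σ (n - A.card) = Aᶜ}) ≤ n.factorial * (w + 2) := by
    calc _ ≤ ∑ _σ : Equiv.Perm (Fin n), ((w : ℝ) + 2) := sum_le_sum fun σ _ => by
          exact_mod_cast card_prefixes_add_card_suffixes_le hw hG σ
      _ = n.factorial * (w + 2) := by
          rw [sum_const, card_univ, Fintype.card_perm, Fintype.card_fin, nsmul_eq_mul]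
  rw [sum_add_distrib, ← hpre, ← hsuf] at hbound
  have hfac : (0 : ℝ) < n.factorial := by positivity
  rw [le_div_iff₀ two_pos]
  nlinarith

end UnionBound

lemma exists_eq_map_mapEmbedding_valEmbedding {F : Finset (Finset ℕ)}
    (hF : ∀ A ∈ F, A ⊆ range n) :
    ∃ G : Finset (Finset (Fin n)), F = G.map (mapEmbedding Fin.valEmbedding).toEmbedding := by
  have hF' :
      F ⊆ (univ : Finset (Finset (Fin n))).map (mapEmbedding Fin.valEmbedding).toEmbedding :=
    fun A hA => mem_map.2 ⟨A.attachFin fun m hm => mem_range.1 (hF A hA hm), mem_univ _,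
      map_valEmbedding_attachFin _⟩
  obtain ⟨G, -, hG⟩ := subset_map_iff.1 hF'
  exact ⟨G, hG⟩

end Katona

theorem stmt_12 (n ℓ : ℕ) (hw : 2 * ℓ < n) (F : Finset (Finset ℕ))
    (hsub : ∀ A ∈ F, A ⊆ Finset.range n)
    (hunion : ∀ A ∈ F, ∀ B ∈ F, (A ∪ B).card ≤ 2 * ℓ) :
    binNorm n F ≤ (ℓ : ℝ) + 1 := by
  obtain ⟨G, rfl⟩ := exists_eq_map_mapEmbedding_valEmbedding hsub
  have hG : ∀ A ∈ G, ∀ B ∈ G, (A ∪ B).card ≤ 2 * ℓ := fun A hA B hB => by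
    simpa [← map_union] using hunion _ (mem_map_of_mem _ hA) _ (mem_map_of_mem _ hB)
  have hbound := sum_one_div_choose_le_of_card_union_le hw hG
  simp only [binNorm, sum_map, RelEmbedding.coe_toEmbedding, mapEmbedding_apply, card_map]
  push_cast at hbound
  linarith
end

section
/- (Binomial Katona Theorem, odd case.) Let ℓ ≥ 1 be an integer with w = 2ℓ − 1 < n, and suppose F ⊆ 2^[n] is w-union. Then ‖F‖_n ≤ ℓ + ℓ/n. -/
open Finset

/-!
Average over the `2ℓ`-subsets `T` of `[n]`: `C(n, 2ℓ) ‖F‖ₙ = ∑_T ‖F ∩ 2^T‖_{2ℓ}`.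
Inside `T` no member of `F` is the complement of another, so for `k ≠ ℓ` the levels `k` and
`2ℓ - k` of `F ∩ 2^T` together contain at most `C(2ℓ, k)` sets, whence
`‖F ∩ 2^T‖_{2ℓ} ≤ ℓ + ‖Fℓ ∩ 2^T‖_{2ℓ}` with `Fℓ` the `ℓ`-uniform part of `F`. Averaging back
gives `‖F‖ₙ ≤ ℓ + ‖Fℓ‖ₙ`; and `Fℓ` is intersecting, so by Erdős–Ko–Rado
`‖Fℓ‖ₙ ≤ C(n - 1, ℓ - 1) / C(n, ℓ) = ℓ / n`.
-/

lemma Nat.cast_choose_sub_div_choose {n m k : ℕ} (hkm : k ≤ m) (hmn : m ≤ n) :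
    ((n - k).choose (m - k) : ℝ) / m.choose k = n.choose m / n.choose k := by
  have hm : (m.choose k : ℝ) ≠ 0 := by exact_mod_cast (Nat.choose_pos hkm).ne'
  have hn : (n.choose k : ℝ) ≠ 0 := by exact_mod_cast (Nat.choose_pos (hkm.trans hmn)).ne'
  rw [div_eq_div_iff hm hn]
  exact_mod_cast (mul_comm _ _).trans (Nat.choose_mul hkm).symm

lemma binNorm_eq_card_div_of_sized {n ℓ : ℕ} {F : Finset (Finset ℕ)}
    (hF : (F : Set (Finset ℕ)).Sized ℓ) : binNorm n F = #F / n.choose ℓ := by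
  rw [binNorm, sum_congr rfl fun A hA => by rw [hF hA], sum_const, nsmul_eq_mul, mul_one_div]

lemma binNorm_eq_sum_card_filter_card_eq {m : ℕ} {H : Finset (Finset ℕ)}
    (hH : ∀ A ∈ H, #A ≤ m) :
    binNorm m H = ∑ k ∈ range (m + 1), (#(H.filter (#· = k)) : ℝ) / m.choose k := by
  rw [binNorm, ← sum_fiberwise_of_maps_to (g := (#·)) fun A hA => mem_range_succ_iff.2 (hH A hA)]
  refine sum_congr rfl fun k _ => ?_
  exact binNorm_eq_card_div_of_sized fun A hA => (mem_filter.1 hA).2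

lemma choose_mul_binNorm_eq_sum_binNorm_filter_subset {m : ℕ} (S : Finset ℕ)
    {F : Finset (Finset ℕ)} (hFS : ∀ A ∈ F, A ⊆ S) (hFm : ∀ A ∈ F, #A ≤ m) (hmS : m ≤ #S) :
    ((#S).choose m : ℝ) * binNorm #S F
      = ∑ T ∈ S.powersetCard m, binNorm m (F.filter (· ⊆ T)) := by
  simp only [binNorm, sum_filter]
  rw [sum_comm, mul_sum]
  refine sum_congr rfl fun A hA => ?_
  rw [← sum_filter, sum_const, nsmul_eq_mul,
    card_filter_powersetCard_subset A S m (hFS A hA) (hFm A hA), mul_one_div, mul_one_div,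
    Nat.cast_choose_sub_div_choose (hFm A hA) hmS]

section Complement

variable {T : Finset ℕ} {H : Finset (Finset ℕ)}

/-- Complementation in `T` maps the `(#T - k)`-sets of `H` injectively to the `k`-subsets of `T`
outside `H`. -/
lemma card_filter_card_eq_add_card_filter_card_eq_sub_le (hHT : ∀ A ∈ H, A ⊆ T)
    (hH : ∀ A ∈ H, ∀ B ∈ H, A ∪ B ≠ T) {k : ℕ} (hk : k ≤ #T) :
    #(H.filter (#· = k)) + #(H.filter (#· = #T - k)) ≤ (#T).choose k := by
  have hlevel : H.filter (#· = k) ⊆ T.powersetCard k := fun A hA => by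
    rw [mem_filter] at hA
    exact mem_powersetCard.2 ⟨hHT A hA.1, hA.2⟩
  have hcompl : #(H.filter (#· = #T - k)) ≤ #(T.powersetCard k \ H.filter (#· = k)) := by
    refine card_le_card_of_injOn (T \ ·) (fun B hB => ?_) fun B hB C hC hBC => ?_
    · rw [mem_coe, mem_filter] at hB
      refine mem_sdiff.2 ⟨mem_powersetCard.2 ⟨sdiff_subset, ?_⟩, fun hA => ?_⟩
      · rw [card_sdiff_of_subset (hHT B hB.1), hB.2]
        omega
      · exact hH _ (mem_filter.1 hA).1 B hB.1 (sdiff_union_of_subset (hHT B hB.1))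
    · rw [mem_coe, mem_filter] at hB hC
      rw [← Finset.sdiff_sdiff_eq_self (hHT B hB.1), ← Finset.sdiff_sdiff_eq_self (hHT C hC.1)]
      exact congrArg (T \ ·) hBC
  rw [card_sdiff_of_subset hlevel, card_powersetCard] at hcompl
  have := card_le_card hlevel
  rw [card_powersetCard] at this
  omega

lemma binNorm_le_add_binNorm_filter_card_eq {ℓ : ℕ} (hT : #T = 2 * ℓ) (hHT : ∀ A ∈ H, A ⊆ T)
    (hH : ∀ A ∈ H, ∀ B ∈ H, A ∪ B ≠ T) :
    binNorm (2 * ℓ) H ≤ ℓ + binNorm (2 * ℓ) (H.filter (#· = ℓ)) := by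
  set a : ℕ → ℕ := fun k => #(H.filter (#· = k))
  have hnorm : binNorm (2 * ℓ) H = ∑ k ∈ range (2 * ℓ + 1), (a k : ℝ) / (2 * ℓ).choose k :=
    binNorm_eq_sum_card_filter_card_eq fun A hA => hT ▸ card_le_card (hHT A hA)
  have hreflect : binNorm (2 * ℓ) H
      = ∑ k ∈ range (2 * ℓ + 1), (a (2 * ℓ - k) : ℝ) / (2 * ℓ).choose k := by
    rw [hnorm, ← sum_range_reflect]
    refine sum_congr rfl fun k hk => ?_
    rw [Nat.add_sub_cancel, Nat.choose_symm (mem_range_succ_iff.1 hk)]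
  have hpair : 2 * binNorm (2 * ℓ) H
      = ∑ k ∈ range (2 * ℓ + 1), ((a k : ℝ) + a (2 * ℓ - k)) / (2 * ℓ).choose k := by
    rw [two_mul]
    nth_rewrite 1 [hnorm]
    rw [hreflect, ← sum_add_distrib]
    simp only [add_div]
  have hmid : binNorm (2 * ℓ) (H.filter (#· = ℓ)) = (a ℓ : ℝ) / (2 * ℓ).choose ℓ :=
    binNorm_eq_card_div_of_sized fun A hA => (mem_filter.1 hA).2
  have hrest : ∀ k ∈ (range (2 * ℓ + 1)).erase ℓ,
      ((a k : ℝ) + a (2 * ℓ - k)) / (2 * ℓ).choose k ≤ 1 := by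
    intro k hk
    have hk : k ≤ #T := hT ▸ mem_range_succ_iff.1 (mem_of_mem_erase hk)
    refine div_le_one_of_le₀ ?_ (Nat.cast_nonneg _)
    have := card_filter_card_eq_add_card_filter_card_eq_sub_le hHT hH hk
    rw [hT] at this
    exact_mod_cast this
  have hℓ : ℓ ∈ range (2 * ℓ + 1) := mem_range_succ_iff.2 (by omega)
  have hbound := sum_le_card_nsmul _ _ _ hrest
  rw [card_erase_of_mem hℓ, card_range, Nat.succ_sub_one, nsmul_one, Nat.cast_mul,
    Nat.cast_two] at hbound
  have : 2 * binNorm (2 * ℓ) H ≤ 2 * binNorm (2 * ℓ) (H.filter (#· = ℓ)) + 2 * ℓ := by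
    rw [hpair, ← add_sum_erase _ _ hℓ, hmid, show 2 * ℓ - ℓ = ℓ by omega, ← two_mul,
      mul_div_assoc]
    exact add_le_add_right hbound _
  linarith

end Complement

lemma card_le_of_intersecting_of_subset_range {n ℓ : ℕ} {F : Finset (Finset ℕ)}
    (hFn : ∀ A ∈ F, A ⊆ range n) (hF : (F : Set (Finset ℕ)).Intersecting)
    (hFℓ : (F : Set (Finset ℕ)).Sized ℓ) (hℓn : 2 * ℓ ≤ n) :
    #F ≤ (n - 1).choose (ℓ - 1) := by
  set 𝒜 : Finset (Finset (Fin n)) := univ.filter (·.map Fin.valEmbedding ∈ F)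
  have hmap : 𝒜.map (mapEmbedding Fin.valEmbedding).toEmbedding = F := by
    ext A
    simp only [𝒜, mem_map, mem_filter, mem_univ, true_and, RelEmbedding.coe_toEmbedding,
      mapEmbedding_apply]
    constructor
    · rintro ⟨B, hB, rfl⟩
      exact hB
    · intro hA
      have hAn : ∀ m ∈ A, m < n := fun m hm => mem_range.1 (hFn A hA hm)
      exact ⟨A.attachFin hAn, by rwa [map_valEmbedding_attachFin], map_valEmbedding_attachFin hAn⟩
  rw [← hmap, card_map]
  refine erdos_ko_rado (fun B hB C hC hBC => hF (mem_filter.1 hB).2 (mem_filter.1 hC).2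
    (disjoint_map _ |>.2 hBC)) (fun B hB => ?_) (by omega)
  rw [← hFℓ (mem_filter.1 hB).2, card_map]

lemma binNorm_le_of_intersecting {n ℓ : ℕ} {F : Finset (Finset ℕ)}
    (hFn : ∀ A ∈ F, A ⊆ range n) (hF : (F : Set (Finset ℕ)).Intersecting)
    (hFℓ : (F : Set (Finset ℕ)).Sized ℓ) (hℓ : 1 ≤ ℓ) (hℓn : 2 * ℓ ≤ n) :
    binNorm n F ≤ ℓ / n := by
  have hekr := card_le_of_intersecting_of_subset_range hFn hF hFℓ hℓn
  obtain ⟨k, rfl⟩ := Nat.exists_eq_add_of_le' hℓ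
  obtain ⟨m, rfl⟩ : ∃ m, n = m + 1 := ⟨n - 1, by omega⟩
  rw [Nat.add_sub_cancel, Nat.add_sub_cancel] at hekr
  have hchoose : (0 : ℝ) < (m + 1).choose (k + 1) := by exact_mod_cast Nat.choose_pos (by omega)
  rw [binNorm_eq_card_div_of_sized hFℓ, div_le_div_iff₀ hchoose (by positivity)]
  have : #F * (m + 1) ≤ (k + 1) * (m + 1).choose (k + 1) := by
    rw [mul_comm (k + 1), ← Nat.add_one_mul_choose_eq]
    exact (Nat.mul_le_mul_right _ hekr).trans_eq (mul_comm _ _)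
  exact_mod_cast this

section UnionBounded

variable {F : Finset (Finset ℕ)} {ℓ : ℕ}

lemma intersecting_filter_card_eq_of_card_union_lt
    (hF : ∀ A ∈ F, ∀ B ∈ F, #(A ∪ B) < 2 * ℓ) :
    (F.filter (#· = ℓ) : Set (Finset ℕ)).Intersecting := by
  intro A hA B hB hAB
  rw [mem_coe, mem_filter] at hA hB
  have := hF A hA.1 B hB.1
  rw [card_union_of_disjoint hAB, hA.2, hB.2] at this
  omega

lemma binNorm_filter_subset_le_of_card_union_lt {T : Finset ℕ}
    (hF : ∀ A ∈ F, ∀ B ∈ F, #(A ∪ B) < 2 * ℓ) (hT : #T = 2 * ℓ) :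
    binNorm (2 * ℓ) (F.filter (· ⊆ T))
      ≤ ℓ + binNorm (2 * ℓ) ((F.filter (#· = ℓ)).filter (· ⊆ T)) := by
  rw [filter_comm]
  refine binNorm_le_add_binNorm_filter_card_eq hT (fun A hA => (mem_filter.1 hA).2)
    fun A hA B hB hAB => ?_
  have := hF A (mem_filter.1 hA).1 B (mem_filter.1 hB).1
  rw [hAB, hT] at this
  exact this.false

end UnionBounded

theorem stmt_13 (n ℓ : ℕ) (hℓ : 1 ≤ ℓ) (hw : 2 * ℓ - 1 < n)
    (F : Finset (Finset ℕ))
    (hsub : ∀ A ∈ F, A ⊆ Finset.range n)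
    (hunion : ∀ A ∈ F, ∀ B ∈ F, (A ∪ B).card ≤ 2 * ℓ - 1) :
    binNorm n F ≤ (ℓ : ℝ) + (ℓ : ℝ) / (n : ℝ) := by
  have hℓn : 2 * ℓ ≤ n := by omega
  have hF : ∀ A ∈ F, ∀ B ∈ F, #(A ∪ B) < 2 * ℓ := fun A hA B hB => by
    have := hunion A hA B hB
    omega
  have hcard : ∀ A ∈ F, #A ≤ 2 * ℓ := fun A hA => by simpa using (hF A hA A hA).le
  set Fℓ := F.filter (#· = ℓ)
  have hFℓ : binNorm n Fℓ ≤ ℓ / n :=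
    binNorm_le_of_intersecting (fun A hA => hsub A (mem_filter.1 hA).1)
      (intersecting_filter_card_eq_of_card_union_lt hF) (fun A hA => (mem_filter.1 hA).2) hℓ hℓn
  have haverage := choose_mul_binNorm_eq_sum_binNorm_filter_subset (range n) hsub hcard
  have haverageℓ := choose_mul_binNorm_eq_sum_binNorm_filter_subset (range n) (F := Fℓ)
    (fun A hA => hsub A (mem_filter.1 hA).1) (fun A hA => hcard A (mem_filter.1 hA).1)
  rw [card_range] at haverage haverageℓ
  have hpos : (0 : ℝ) < n.choose (2 * ℓ) := by exact_mod_cast Nat.choose_pos hℓn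
  refine le_of_mul_le_mul_left ?_ hpos
  calc (n.choose (2 * ℓ) : ℝ) * binNorm n F
      = ∑ T ∈ (range n).powersetCard (2 * ℓ), binNorm (2 * ℓ) (F.filter (· ⊆ T)) :=
        haverage hℓn
    _ ≤ ∑ T ∈ (range n).powersetCard (2 * ℓ), (ℓ + binNorm (2 * ℓ) (Fℓ.filter (· ⊆ T))) :=
        sum_le_sum fun T hT =>
          binNorm_filter_subset_le_of_card_union_lt hF (mem_powersetCard.1 hT).2
    _ = n.choose (2 * ℓ) * ℓ + n.choose (2 * ℓ) * binNorm n Fℓ := by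
        rw [sum_add_distrib, ← haverageℓ hℓn, sum_const, card_powersetCard, card_range,
          nsmul_eq_mul]
    _ ≤ n.choose (2 * ℓ) * (ℓ + ℓ / n) := by
        rw [mul_add]
        gcongr
end

section
/- Let n and ℓ be integers with n ≥ 3ℓ and n > ℓ ≥ 0, and exclude the cases where n = 3ℓ and 2 ≤ ℓ ≤ 5. Then for every down-set F ⊆ 2^[n] with ‖F‖_n < n + 1, one has |F| ≥ Σ_{0 ≤ i < ℓ} C(n,i) + (‖F‖_n − ℓ)·C(n,ℓ). -/
/-!
Let `pᵢ = |Fᵢ| / C(n, i)` be the density of the `i`-th level of `F`. By the local LYM inequality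
`p` is antitone on a down-set, and `‖F‖ₙ < n + 1` keeps `[n]` out of `F`, so
`|F| - ‖F‖ₙ C(n, ℓ) = ∑_{i < n} pᵢ (C(n, i) - C(n, ℓ))`. Below level `ℓ` each summand is at least
`C(n, i) - C(n, ℓ)` because `pᵢ ≤ 1`. From level `ℓ` on, Abel summation reduces nonnegativity to
that of the partial sums `∑_{ℓ ≤ i < t} (C(n, i) - C(n, ℓ))`. They are termwise nonnegative for
`t ≤ n - ℓ + 1`, and beyond that they follow from `(n - ℓ) C(n, ℓ) < ∑_{j ≤ n - ℓ} C(n, j)`,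
proved by induction on `n` from `n = 3ℓ`.
-/

open Finset

open scoped FinsetFamily

namespace Nat

theorem choose_le_choose_of_le_half {n a b : ℕ} (hab : a ≤ b) (hb : b ≤ n / 2) :
    n.choose a ≤ n.choose b := by
  induction b, hab using Nat.le_induction with
  | base => rfl
  | succ b hab ih => exact (ih (by omega)).trans (choose_le_succ_of_lt_half_left (by omega))

theorem choose_le_choose_of_le_of_le_sub {n ℓ i : ℕ} (hℓi : ℓ ≤ i) (hin : i ≤ n - ℓ) :
    n.choose ℓ ≤ n.choose i := by
  rcases le_or_gt i (n / 2) with h | h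
  · exact choose_le_choose_of_le_half hℓi h
  · rw [← choose_symm (by omega : i ≤ n)]
    exact choose_le_choose_of_le_half (by omega) (by omega)

theorem sum_range_succ_choose_succ (N m : ℕ) :
    ∑ j ∈ range (m + 1), (N + 1).choose j
      = ∑ j ∈ range m, N.choose j + ∑ j ∈ range (m + 1), N.choose j := by
  simp only [sum_range_succ', choose_succ_succ', sum_add_distrib, choose_zero_right]
  ring

theorem sum_range_choose_add_sum_range_choose {n a b : ℕ} (h : a + b = n) :
    ∑ j ∈ range (a + 1), n.choose j + ∑ j ∈ range b, n.choose j = 2 ^ n := by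
  rw [← sum_range_choose, ← sum_range_reflect (fun j => n.choose j) b,
    show n + 1 = a + 1 + b by omega, sum_range_add _ (a + 1) b]
  congr 1
  refine sum_congr rfl fun j hj => choose_symm_of_eq_add ?_
  simp only [mem_range] at hj
  omega

theorem sum_range_choose_le_choose {n ℓ : ℕ} (h : 3 * ℓ ≤ n + 1) :
    ∑ j ∈ range ℓ, n.choose j ≤ n.choose ℓ := by
  induction ℓ with
  | zero => simp
  | succ ℓ ih =>
    have hdouble : 2 * n.choose ℓ ≤ n.choose (ℓ + 1) := by
      refine Nat.le_of_mul_le_mul_right (?_ : _ * (ℓ + 1) ≤ _) ℓ.succ_pos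
      rw [choose_succ_right_eq, mul_assoc, mul_comm 2, mul_assoc]
      exact Nat.mul_le_mul_left _ (by omega)
    rw [sum_range_succ]
    have := ih (by omega)
    omega

theorem four_mul_choose_three_mul_add_three_le (ℓ : ℕ) :
    4 * (3 * ℓ + 3).choose (ℓ + 1) ≤ 27 * (3 * ℓ).choose ℓ := by
  have h1 := choose_mul_succ_eq (3 * ℓ) ℓ
  have h2 := choose_mul_succ_eq (3 * ℓ + 1) ℓ
  have h3 := add_one_mul_choose_eq (3 * ℓ + 2) ℓ
  rw [show 3 * ℓ + 1 - ℓ = 2 * ℓ + 1 by omega] at h1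
  rw [show 3 * ℓ + 1 + 1 - ℓ = 2 * ℓ + 2 by omega] at h2
  set c₀ := (3 * ℓ).choose ℓ
  set c₁ := (3 * ℓ + 1).choose ℓ
  set c₂ := (3 * ℓ + 1 + 1).choose ℓ
  set c₃ := (3 * ℓ + 2 + 1).choose (ℓ + 1)
  have hD : 0 < (ℓ + 1) * (2 * ℓ + 2) * (2 * ℓ + 1) := by positivity
  refine Nat.le_of_mul_le_mul_right (?_ : _ * ((ℓ + 1) * (2 * ℓ + 2) * (2 * ℓ + 1)) ≤ _) hD
  calc 4 * c₃ * ((ℓ + 1) * (2 * ℓ + 2) * (2 * ℓ + 1))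
      = 4 * (c₃ * (ℓ + 1)) * (2 * ℓ + 2) * (2 * ℓ + 1) := by ring
    _ = 4 * (3 * ℓ + 3) * (c₂ * (2 * ℓ + 2)) * (2 * ℓ + 1) := by rw [← h3]; ring
    _ = 4 * (3 * ℓ + 3) * (3 * ℓ + 2) * (c₁ * (2 * ℓ + 1)) := by rw [← h2]; ring
    _ = 4 * (3 * ℓ + 3) * (3 * ℓ + 2) * (3 * ℓ + 1) * c₀ := by rw [← h1]; ring
    _ ≤ 27 * ((ℓ + 1) * (2 * ℓ + 2) * (2 * ℓ + 1)) * c₀ :=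
        Nat.mul_le_mul_right c₀ (by nlinarith)
    _ = 27 * c₀ * ((ℓ + 1) * (2 * ℓ + 2) * (2 * ℓ + 1)) := by ring

theorem two_mul_add_one_mul_choose_three_mul_lt_two_pow {ℓ : ℕ} (hℓ : 6 ≤ ℓ) :
    (2 * ℓ + 1) * (3 * ℓ).choose ℓ < 2 ^ (3 * ℓ) := by
  induction ℓ, hℓ using Nat.le_induction with
  | base => decide
  | succ ℓ hℓ ih =>
    have hratio := four_mul_choose_three_mul_add_three_le ℓ
    have : 4 * ((2 * ℓ + 3) * (3 * ℓ + 3).choose (ℓ + 1)) < 4 * 2 ^ (3 * ℓ + 3) := by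
      calc 4 * ((2 * ℓ + 3) * (3 * ℓ + 3).choose (ℓ + 1))
          ≤ (2 * ℓ + 3) * (27 * (3 * ℓ).choose ℓ) := by
            rw [mul_left_comm]; exact Nat.mul_le_mul_left _ hratio
        _ ≤ 32 * ((2 * ℓ + 1) * (3 * ℓ).choose ℓ) := by
            rw [← mul_assoc, ← mul_assoc]
            exact Nat.mul_le_mul_right _ (by omega)
        _ < 32 * 2 ^ (3 * ℓ) := by omega
        _ = 4 * 2 ^ (3 * ℓ + 3) := by ring
    rw [show 3 * (ℓ + 1) = 3 * ℓ + 3 by ring, show 2 * (ℓ + 1) + 1 = 2 * ℓ + 3 by ring]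
    omega

theorem mul_choose_three_mul_lt_sum_range_choose {ℓ : ℕ} (hℓ : 6 ≤ ℓ) :
    2 * ℓ * (3 * ℓ).choose ℓ < ∑ j ∈ range (2 * ℓ + 1), (3 * ℓ).choose j := by
  have htotal := sum_range_choose_add_sum_range_choose (show 2 * ℓ + ℓ = 3 * ℓ by ring)
  have hlow := sum_range_choose_le_choose (show 3 * ℓ ≤ 3 * ℓ + 1 by omega)
  have := two_mul_add_one_mul_choose_three_mul_lt_two_pow hℓ
  rw [add_mul, one_mul] at this
  omega

theorem succ_mul_choose_lt_sum_range_choose {m ℓ : ℕ} (hℓ : 0 < ℓ) (hℓm : ℓ < m)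
    (h : m * (m + ℓ).choose ℓ < ∑ j ∈ range (m + 1), (m + ℓ).choose j) :
    (m + 1) * (m + 1 + ℓ).choose ℓ < ∑ j ∈ range (m + 1 + 1), (m + 1 + ℓ).choose j := by
  obtain ⟨k, rfl⟩ : ∃ k, ℓ = k + 1 := ⟨ℓ - 1, by omega⟩
  have hpascal : (m + 1 + (k + 1)).choose (k + 1)
      = (m + (k + 1)).choose k + (m + (k + 1)).choose (k + 1) := by
    rw [show m + 1 + (k + 1) = m + (k + 1) + 1 by ring, choose_succ_succ']
  have hrec := choose_succ_right_eq (m + (k + 1)) k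
  rw [show m + (k + 1) - k = m + 1 by omega] at hrec
  rw [hpascal, show m + 1 + (k + 1) = m + (k + 1) + 1 by ring, sum_range_succ_choose_succ,
    sum_range_succ _ (m + 1)]
  set c := (m + (k + 1)).choose (k + 1)
  calc (m + 1) * ((m + (k + 1)).choose k + c)
      = (k + 1) * c + (m + 1) * c := by rw [mul_add, mul_comm (m + 1), ← hrec, mul_comm]
    _ ≤ 2 * (m * c) := by nlinarith
    _ < _ := by omega

theorem mul_choose_lt_sum_range_choose {m ℓ : ℕ} (hm : 2 * ℓ ≤ m)
    (hexc : ¬(m = 2 * ℓ ∧ 2 ≤ ℓ ∧ ℓ ≤ 4)) :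
    m * (m + ℓ).choose ℓ < ∑ j ∈ range (m + 1), (m + ℓ).choose j := by
  rcases Nat.eq_zero_or_pos ℓ with rfl | hℓ
  · simpa [sum_range_choose] using m.lt_two_pow_self
  have hbase : ¬(2 ≤ ℓ ∧ ℓ ≤ 4) →
      2 * ℓ * (2 * ℓ + ℓ).choose ℓ < ∑ j ∈ range (2 * ℓ + 1), (2 * ℓ + ℓ).choose j := by
    intro hℓ'
    rw [show 2 * ℓ + ℓ = 3 * ℓ by ring]
    obtain rfl | rfl | h6 : ℓ = 1 ∨ ℓ = 5 ∨ 6 ≤ ℓ := by omega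
    · decide
    · decide
    · exact mul_choose_three_mul_lt_sum_range_choose h6
  -- At `m = 2 * ℓ` the inequality fails for `2 ≤ ℓ ≤ 4`; there the induction starts one step later.
  by_cases hm' : m = 2 * ℓ
  · exact hm' ▸ hbase fun h => hexc ⟨hm', h⟩
  have hbase' : (2 * ℓ + 1) * (2 * ℓ + 1 + ℓ).choose ℓ
      < ∑ j ∈ range (2 * ℓ + 1 + 1), (2 * ℓ + 1 + ℓ).choose j := by
    by_cases hsmall : 2 ≤ ℓ ∧ ℓ ≤ 4
    · obtain rfl | rfl | rfl : ℓ = 2 ∨ ℓ = 3 ∨ ℓ = 4 := by omega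
      all_goals decide
    · exact succ_mul_choose_lt_sum_range_choose hℓ (by omega) (hbase hsmall)
  induction m, (show 2 * ℓ + 1 ≤ m by omega) using Nat.le_induction with
  | base => exact hbase'
  | succ m hm ih =>
    exact succ_mul_choose_lt_sum_range_choose hℓ (by omega) (ih (by omega) (by omega) (by omega))

theorem sub_mul_choose_le_sum_Ico_choose {n ℓ : ℕ} (h3ℓ : 3 * ℓ ≤ n)
    (hexc : ¬(n = 3 * ℓ ∧ 2 ≤ ℓ ∧ ℓ ≤ 4)) :
    (n - ℓ) * n.choose ℓ ≤ ∑ i ∈ Ico ℓ n, n.choose i := by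
  obtain ⟨m, rfl⟩ : ∃ m, n = m + ℓ := ⟨n - ℓ, by omega⟩
  have h := mul_choose_lt_sum_range_choose (m := m) (ℓ := ℓ) (by omega)
    fun ⟨hm, hsmall⟩ => hexc ⟨by omega, hsmall⟩
  have hreflect : ∑ j ∈ range (m + 1), (m + ℓ).choose j
      = ∑ i ∈ Ico ℓ (m + ℓ + 1), (m + ℓ).choose i := by
    have hsymm : ∀ j ∈ Ico 0 (m + 1), (m + ℓ).choose j = (m + ℓ).choose (m + ℓ - j) :=
      fun j hj => (choose_symm (by simp only [mem_Ico] at hj; omega)).symm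
    rw [range_eq_Ico, sum_congr rfl hsymm, sum_Ico_reflect _ _ (by omega)]
    congr 2; omega
  rw [hreflect, sum_Ico_succ_top (by omega), choose_self] at h
  rw [Nat.add_sub_cancel]
  omega

end Nat

theorem sum_Ico_choose_sub_choose_nonneg {n ℓ t : ℕ} (h3ℓ : 3 * ℓ ≤ n)
    (hexc : ¬(n = 3 * ℓ ∧ 2 ≤ ℓ ∧ ℓ ≤ 4)) (ht : t ≤ n) :
    0 ≤ ∑ i ∈ Ico ℓ t, ((n.choose i : ℝ) - n.choose ℓ) := by
  by_cases htℓ : t ≤ n - ℓ + 1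
  · refine sum_nonneg fun i hi => sub_nonneg.2 ?_
    rw [mem_Ico] at hi
    exact_mod_cast Nat.choose_le_choose_of_le_of_le_sub hi.1 (by omega)
  have hfull : 0 ≤ ∑ i ∈ Ico ℓ n, ((n.choose i : ℝ) - n.choose ℓ) := by
    rw [sum_sub_distrib, sum_const, Nat.card_Ico, nsmul_eq_mul, sub_nonneg]
    exact_mod_cast Nat.sub_mul_choose_le_sum_Ico_choose h3ℓ hexc
  have htail : ∑ i ∈ Ico t n, ((n.choose i : ℝ) - n.choose ℓ) ≤ 0 := by
    refine sum_nonpos fun i hi => sub_nonpos.2 ?_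
    rw [mem_Ico] at hi
    rw [← Nat.choose_symm hi.2.le]
    exact_mod_cast Nat.choose_le_choose_of_le_half (by omega) (by omega)
  rw [← sum_Ico_consecutive _ (by omega : ℓ ≤ t) ht] at hfull
  linarith

section Abel

variable {R : Type*} [CommRing R] [PartialOrder R] [IsOrderedRing R]

theorem Antitone.mul_sum_Ico_le_sum_Ico_mul {p c : ℕ → R} (hp : Antitone p) {a b : ℕ}
    (hc : ∀ t ≤ b, 0 ≤ ∑ i ∈ Ico a t, c i) :
    p b * ∑ i ∈ Ico a b, c i ≤ ∑ i ∈ Ico a b, p i * c i := by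
  induction b with
  | zero => simp
  | succ b ih =>
    rcases lt_or_ge b a with hba | hab
    · simp [Ico_eq_empty_of_le (by omega : b + 1 ≤ a)]
    rw [sum_Ico_succ_top hab, sum_Ico_succ_top hab]
    calc p (b + 1) * (∑ i ∈ Ico a b, c i + c b)
        ≤ p b * (∑ i ∈ Ico a b, c i + c b) :=
          mul_le_mul_of_nonneg_right (hp b.le_succ) (sum_Ico_succ_top hab c ▸ hc (b + 1) le_rfl)
      _ = p b * ∑ i ∈ Ico a b, c i + p b * c b := mul_add _ _ _
      _ ≤ ∑ i ∈ Ico a b, p i * c i + p b * c b :=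
          add_le_add_left (ih fun t ht => hc t (by omega)) _

theorem sum_range_le_sum_range_mul_of_antitone {p w : ℕ → R} {ℓ N : ℕ} (hℓN : ℓ ≤ N)
    (hp : Antitone p) (hpN : 0 ≤ p N) (hp_le_one : ∀ i < ℓ, p i ≤ 1) (hw_nonpos : ∀ i < ℓ, w i ≤ 0)
    (hw_partial : ∀ t ≤ N, 0 ≤ ∑ i ∈ Ico ℓ t, w i) :
    ∑ i ∈ range ℓ, w i ≤ ∑ i ∈ range N, p i * w i := by
  rw [← sum_range_add_sum_Ico _ hℓN]
  refine le_add_of_le_of_nonneg (sum_le_sum fun i hi => ?_) ?_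
  · have hi := mem_range.1 hi
    have : 0 ≤ (1 - p i) * -w i :=
      mul_nonneg (sub_nonneg.2 (hp_le_one i hi)) (neg_nonneg.2 (hw_nonpos i hi))
    linear_combination this
  · exact (mul_nonneg hpN (hw_partial N le_rfl)).trans (hp.mul_sum_Ico_le_sum_Ico_mul hw_partial)

end Abel

theorem IsLowerSet.card_slice_succ_div_choose_le {𝕜 α : Type*} [Semifield 𝕜] [LinearOrder 𝕜]
    [IsStrictOrderedRing 𝕜] [DecidableEq α] [Fintype α] {𝒜 : Finset (Finset α)}
    (h𝒜 : IsLowerSet (𝒜 : Set (Finset α))) (r : ℕ) :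
    (#(𝒜 # (r + 1)) : 𝕜) / (Fintype.card α).choose (r + 1)
      ≤ #(𝒜 # r) / (Fintype.card α).choose r := by
  refine (local_lubell_yamamoto_meshalkin_inequality_div r.succ_ne_zero
    (sized_slice (𝒜 := 𝒜))).trans ?_
  have hshadow : ∂ (𝒜 # (r + 1)) ⊆ 𝒜 # r := by
    intro s hs
    obtain ⟨t, ht, a, ha, rfl⟩ := mem_shadow_iff.1 hs
    rw [mem_slice] at ht ⊢
    exact ⟨h𝒜 (erase_subset a t) ht.1, by rw [card_erase_of_mem ha, ht.2]; rfl⟩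
  rw [Nat.succ_sub_one]
  gcongr

theorem antitone_card_slice_div_choose {n : ℕ} {F : Finset (Finset ℕ)}
    (hsub : ∀ A ∈ F, A ⊆ range n) (hdown : ∀ A ∈ F, ∀ B ⊆ A, B ∈ F) :
    Antitone fun i => (#(F # i) : ℝ) / n.choose i := by
  classical
  -- Mathlib's local LYM inequality lives on a `Fintype`, so transport `F` to the cube over `Fin n`.
  let 𝒜 : Finset (Finset (Fin n)) := {s | s.map Fin.valEmbedding ∈ F}
  have h𝒜 : IsLowerSet (𝒜 : Set (Finset (Fin n))) := fun s t hts hs => by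
    simp only [𝒜, mem_coe, mem_filter, mem_univ, true_and] at hs ⊢
    exact hdown _ hs _ (map_subset_map.2 hts)
  have hslice : ∀ r, #(𝒜 # r) = #(F # r) := fun r => by
    rw [← card_map (mapEmbedding Fin.valEmbedding).toEmbedding]
    congr 1
    ext A
    simp only [mem_map, mem_slice, 𝒜, mem_filter, mem_univ, true_and,
      RelEmbedding.coe_toEmbedding, mapEmbedding_apply]
    constructor
    · rintro ⟨s, ⟨hs, rfl⟩, rfl⟩
      exact ⟨hs, card_map _⟩
    · rintro ⟨hA, rfl⟩
      have hlt : ∀ m ∈ A, m < n := fun m hm => mem_range.1 (hsub A hA hm)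
      refine ⟨A.attachFin hlt, ?_, map_valEmbedding_attachFin hlt⟩
      rw [map_valEmbedding_attachFin, card_attachFin]
      exact ⟨hA, rfl⟩
  refine antitone_nat_of_succ_le fun r => ?_
  simpa only [hslice, Fintype.card_fin] using h𝒜.card_slice_succ_div_choose_le (𝕜 := ℝ) r

theorem card_slice_le_choose {n : ℕ} {F : Finset (Finset ℕ)} (hsub : ∀ A ∈ F, A ⊆ range n)
    (i : ℕ) : #(F # i) ≤ n.choose i := by
  simpa using card_le_card fun A (hA : A ∈ F # i) =>
    mem_powersetCard.2 ⟨hsub A (mem_slice.1 hA).1, (mem_slice.1 hA).2⟩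

theorem binNorm_eq_sum_card_slice {n : ℕ} {F : Finset (Finset ℕ)} {s : Finset ℕ}
    (hF : ∀ A ∈ F, #A ∈ s) : binNorm n F = ∑ i ∈ s, (#(F # i) : ℝ) / n.choose i := by
  rw [binNorm, ← sum_fiberwise_of_maps_to hF]
  refine sum_congr rfl fun i _ => ?_
  rw [sum_congr rfl fun A hA => by rw [(mem_filter.1 hA).2], sum_const, nsmul_eq_mul,
    mul_one_div]
  rfl

theorem binNorm_powerset_range (n : ℕ) : binNorm n (range n).powerset = n + 1 := by
  have hF : ∀ A ∈ (range n).powerset, #A ∈ range (n + 1) := fun A hA =>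
    mem_range.2 (Nat.lt_succ_of_le (by simpa using card_le_card (mem_powerset.1 hA)))
  have hlevel : ∀ i ∈ range (n + 1), (#((range n).powerset # i) : ℝ) / n.choose i = 1 :=
    fun i hi => by
      rw [slice, ← powersetCard_eq_filter, card_powersetCard, card_range, div_self]
      exact_mod_cast (Nat.choose_pos (by simpa [Nat.lt_succ_iff] using hi)).ne'
  rw [binNorm_eq_sum_card_slice hF, sum_congr rfl hlevel]
  simp

theorem card_lt_of_binNorm_lt {n : ℕ} {F : Finset (Finset ℕ)} (hsub : ∀ A ∈ F, A ⊆ range n)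
    (hdown : ∀ A ∈ F, ∀ B ⊆ A, B ∈ F) (hnorm : binNorm n F < n + 1) {A : Finset ℕ}
    (hA : A ∈ F) : #A < n := by
  by_contra! h
  have hA_eq : A = range n := eq_of_subset_of_card_le (hsub A hA) (by simpa using h)
  have hpow : (range n).powerset ⊆ F := fun B hB => hdown A hA B (hA_eq ▸ mem_powerset.1 hB)
  have := sum_le_sum_of_subset_of_nonneg (f := fun B => 1 / (n.choose #B : ℝ)) hpow
    fun B _ _ => by positivity
  rw [← binNorm, ← binNorm, binNorm_powerset_range] at this
  linarith

theorem stmt_14_general (n ℓ : ℕ) (h3ℓ : 3 * ℓ ≤ n)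
    (hexc : ¬ (n = 3 * ℓ ∧ 2 ≤ ℓ ∧ ℓ ≤ 5))
    (F : Finset (Finset ℕ))
    (hsub : ∀ A ∈ F, A ⊆ Finset.range n)
    (hdown : ∀ A ∈ F, ∀ B ⊆ A, B ∈ F)
    (hnorm : binNorm n F < (n : ℝ) + 1) :
    (F.card : ℝ) ≥ (∑ i ∈ Finset.range ℓ, (n.choose i : ℝ)) +
      (binNorm n F - (ℓ : ℝ)) * (n.choose ℓ : ℝ) := by
  have hF : ∀ A ∈ F, #A ∈ range n := fun A hA =>
    mem_range.2 (card_lt_of_binNorm_lt hsub hdown hnorm hA)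
  set p : ℕ → ℝ := fun i => #(F # i) / n.choose i
  have hcard : (#F : ℝ) = ∑ i ∈ range n, p i * n.choose i := by
    rw [card_eq_sum_card_fiberwise hF, Nat.cast_sum]
    refine sum_congr rfl fun i hi => (div_mul_cancel₀ _ ?_).symm
    exact_mod_cast (Nat.choose_pos (mem_range.1 hi).le).ne'
  have key := sum_range_le_sum_range_mul_of_antitone (p := p)
    (w := fun i => (n.choose i : ℝ) - n.choose ℓ) (by omega)
    (antitone_card_slice_div_choose hsub hdown) (by positivity)
    (fun i _ => div_le_one_of_le₀ (by exact_mod_cast card_slice_le_choose hsub i) (by positivity))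
    (fun i hi => sub_nonpos.2 (by exact_mod_cast Nat.choose_le_choose_of_le_half hi.le (by omega)))
    (fun t ht => sum_Ico_choose_sub_choose_nonneg h3ℓ (fun h => hexc ⟨h.1, h.2.1, by omega⟩) ht)
  simp only [mul_sub, sum_sub_distrib, sum_const, card_range, nsmul_eq_mul, ← sum_mul] at key
  rw [binNorm_eq_sum_card_slice hF, hcard]
  linarith

theorem stmt_14 (n ℓ : ℕ) (h3ℓ : 3 * ℓ ≤ n) (hℓn : ℓ < n)
    (hexc : ¬ (n = 3 * ℓ ∧ 2 ≤ ℓ ∧ ℓ ≤ 5))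
    (F : Finset (Finset ℕ))
    (hsub : ∀ A ∈ F, A ⊆ Finset.range n)
    (hdown : ∀ A ∈ F, ∀ B ⊆ A, B ∈ F)
    (hnorm : binNorm n F < (n : ℝ) + 1) :
    (F.card : ℝ) ≥ (∑ i ∈ Finset.range ℓ, (n.choose i : ℝ)) +
      (binNorm n F - (ℓ : ℝ)) * (n.choose ℓ : ℝ) :=
  stmt_14_general n ℓ h3ℓ hexc F hsub hdown hnorm
end

section
/- Let n, k, ℓ be positive integers with n − 1 > k > ℓ and n ≥ 3ℓ. Then Σ_{ℓ ≤ j ≤ k} C(n,j) > (k − ℓ + 1)·C(n,ℓ). Moreover, except when n = 3ℓ and 2 ≤ ℓ ≤ 5, the same inequality holds with k = n − 1 as well. -/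
open Finset

private lemma choose_mono_half {n a b : ℕ} (hab : a ≤ b) (hb : 2 * b ≤ n) :
    n.choose a ≤ n.choose b := by
  induction b with
  | zero => simp_all
  | succ m ih =>
    rcases Nat.eq_or_lt_of_le hab with rfl | h
    · exact le_rfl
    · calc n.choose a ≤ n.choose m := ih (by omega) (by omega)
        _ ≤ n.choose (m + 1) := Nat.choose_le_succ_of_lt_half_left (by omega)

private lemma choose_between {n a j : ℕ} (h1 : a ≤ j) (h2 : j ≤ n - a) :
    n.choose a ≤ n.choose j := by
  rcases le_or_gt (2 * j) n with hj | hj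
  · exact choose_mono_half h1 hj
  · have hjn : j ≤ n := by omega
    rw [← Nat.choose_symm hjn]
    exact choose_mono_half (by omega) (by omega)

private lemma choose_lt_succ {n a : ℕ} (h : 2 * a + 1 < n) :
    n.choose a < n.choose (a + 1) := by
  have key := Nat.choose_succ_right_eq n a
  have pos : 0 < n.choose a := Nat.choose_pos (by omega)
  have h1 : n.choose a * (a + 1) < n.choose a * (n - a) :=
    mul_lt_mul_of_pos_left (by omega) pos
  rw [← key] at h1
  exact Nat.lt_of_mul_lt_mul_right h1

private lemma sum_split (f : ℕ → ℕ) {a b c : ℕ} (ha : 1 ≤ a) (hab : a - 1 ≤ b) (hbc : b ≤ c) :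
    (∑ j ∈ Icc a b, f j) + (∑ j ∈ Icc (b + 1) c, f j) = ∑ j ∈ Icc a c, f j := by
  have h1 : Icc a b = Ioc (a - 1) b := by rw [← Finset.Icc_add_one_left_eq_Ioc]; congr 1; omega
  have h2 : Icc (b + 1) c = Ioc b c := by rw [← Finset.Icc_add_one_left_eq_Ioc]
  have h3 : Icc a c = Ioc (a - 1) c := by rw [← Finset.Icc_add_one_left_eq_Ioc]; congr 1; omega
  rw [h1, h2, h3]
  exact Finset.sum_Ioc_consecutive _ hab hbc

private lemma card_bound {n a b c : ℕ} (hca : c ≤ a) (hb : b ≤ n - c) :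
    (b + 1 - a) * n.choose c ≤ ∑ j ∈ Icc a b, n.choose j := by
  have := Finset.card_nsmul_le_sum (Icc a b) n.choose (n.choose c)
    (fun j hj => by
      simp only [mem_Icc] at hj
      exact choose_between (le_trans hca hj.1) (le_trans hj.2 hb))
  simpa [Nat.card_Icc, smul_eq_mul] using this

private lemma star (n ℓ : ℕ) (hℓ : 1 ≤ ℓ) (h3 : 3 * ℓ ≤ n) (h4 : 4 ≤ n)
    (hexc : ¬ (n = 3 * ℓ ∧ 2 ≤ ℓ ∧ ℓ ≤ 5)) :
    (n - ℓ) * n.choose ℓ < ∑ j ∈ Icc ℓ (n - 1), n.choose j := by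
  have key : (ℓ + 1) * n.choose (ℓ + 1) = (n - ℓ) * n.choose ℓ := by
    rw [mul_comm, Nat.choose_succ_right_eq, mul_comm]
  have posℓ : 0 < n.choose ℓ := Nat.choose_pos (by omega)
  have posℓ1 : 0 < n.choose (ℓ + 1) := Nat.choose_pos (by omega)
  rcases lt_or_ge (3 * ℓ + 1) n with hbig | hrest
  · -- n ≥ 3ℓ + 2
    have hupper : ∑ j ∈ Icc ℓ (2 * ℓ + 1), n.choose j ≤ ∑ j ∈ Icc ℓ (n - 1), n.choose j :=
      Finset.sum_le_sum_of_subset (Icc_subset_Icc_right (by omega))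
    have hsplit := sum_split n.choose (a := ℓ) (b := ℓ) (c := 2 * ℓ + 1) hℓ (by omega) (by omega)
    have hmid : (ℓ + 1) * n.choose (ℓ + 1) ≤ ∑ j ∈ Icc (ℓ + 1) (2 * ℓ + 1), n.choose j := by
      have := card_bound (n := n) (a := ℓ + 1) (b := 2 * ℓ + 1) (c := ℓ + 1) le_rfl (by omega)
      simpa [show 2 * ℓ + 1 + 1 - (ℓ + 1) = ℓ + 1 by omega] using this
    have hself : ∑ j ∈ Icc ℓ ℓ, n.choose j = n.choose ℓ := by simp
    calc (n - ℓ) * n.choose ℓ = (ℓ + 1) * n.choose (ℓ + 1) := key.symm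
      _ < n.choose ℓ + (ℓ + 1) * n.choose (ℓ + 1) := Nat.lt_add_of_pos_left posℓ
      _ ≤ n.choose ℓ + ∑ j ∈ Icc (ℓ + 1) (2 * ℓ + 1), n.choose j := Nat.add_le_add_left hmid _
      _ = ∑ j ∈ Icc ℓ ℓ, n.choose j + ∑ j ∈ Icc (ℓ + 1) (2 * ℓ + 1), n.choose j := by rw [hself]
      _ = ∑ j ∈ Icc ℓ (2 * ℓ + 1), n.choose j := hsplit
      _ ≤ _ := hupper
  rcases lt_or_ge (3 * ℓ) n with hmed | hlow
  · -- n = 3ℓ + 1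
    have hn : n = 3 * ℓ + 1 := by omega
    have hsym : n.choose (2 * ℓ + 1) = n.choose ℓ := by
      rw [show 2 * ℓ + 1 = n - ℓ by omega]
      exact Nat.choose_symm (by omega)
    have hupper : ∑ j ∈ Icc ℓ (2 * ℓ + 1), n.choose j ≤ ∑ j ∈ Icc ℓ (n - 1), n.choose j :=
      Finset.sum_le_sum_of_subset (Icc_subset_Icc_right (by omega))
    have hsplit1 := sum_split n.choose (a := ℓ) (b := ℓ) (c := 2 * ℓ + 1) hℓ (by omega) (by omega)
    have hsplit2 := sum_split n.choose (a := ℓ + 1) (b := 2 * ℓ) (c := 2 * ℓ + 1)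
      (by omega) (by omega) (by omega)
    have hmid : ℓ * n.choose (ℓ + 1) ≤ ∑ j ∈ Icc (ℓ + 1) (2 * ℓ), n.choose j := by
      have := card_bound (n := n) (a := ℓ + 1) (b := 2 * ℓ) (c := ℓ + 1) le_rfl (by omega)
      simpa [show 2 * ℓ + 1 - (ℓ + 1) = ℓ by omega] using this
    have h2C : n.choose (ℓ + 1) < 2 * n.choose ℓ := by
      have hmul : (ℓ + 1) * n.choose (ℓ + 1) < (ℓ + 1) * (2 * n.choose ℓ) := by
        rw [key, show n - ℓ = 2 * ℓ + 1 by omega]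
        calc (2 * ℓ + 1) * n.choose ℓ < (2 * ℓ + 2) * n.choose ℓ :=
              mul_lt_mul_of_pos_right (by omega) posℓ
          _ = (ℓ + 1) * (2 * n.choose ℓ) := by ring
      exact Nat.lt_of_mul_lt_mul_left hmul
    have hself : ∑ j ∈ Icc ℓ ℓ, n.choose j = n.choose ℓ := by simp
    have hself2 : ∑ j ∈ Icc (2 * ℓ + 1) (2 * ℓ + 1), n.choose j = n.choose ℓ := by
      simp [hsym]
    calc (n - ℓ) * n.choose ℓ = (ℓ + 1) * n.choose (ℓ + 1) := key.symm
      _ = ℓ * n.choose (ℓ + 1) + n.choose (ℓ + 1) := by ring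
      _ < ℓ * n.choose (ℓ + 1) + 2 * n.choose ℓ := Nat.add_lt_add_left h2C _
      _ ≤ (∑ j ∈ Icc (ℓ + 1) (2 * ℓ), n.choose j) + 2 * n.choose ℓ := Nat.add_le_add_right hmid _
      _ = n.choose ℓ + ((∑ j ∈ Icc (ℓ + 1) (2 * ℓ), n.choose j) + n.choose ℓ) := by ring
      _ = ∑ j ∈ Icc ℓ ℓ, n.choose j + ((∑ j ∈ Icc (ℓ + 1) (2 * ℓ), n.choose j)
            + ∑ j ∈ Icc (2 * ℓ + 1) (2 * ℓ + 1), n.choose j) := by rw [hself, hself2]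
      _ = ∑ j ∈ Icc ℓ ℓ, n.choose j + ∑ j ∈ Icc (ℓ + 1) (2 * ℓ + 1), n.choose j := by
            rw [hsplit2]
      _ = ∑ j ∈ Icc ℓ (2 * ℓ + 1), n.choose j := hsplit1
      _ ≤ _ := hupper
  · -- n = 3ℓ
    have hn : n = 3 * ℓ := by omega
    have hℓ6 : 6 ≤ ℓ := by
      by_contra hcon
      exact hexc ⟨hn, by omega, by omega⟩
    rcases (show ℓ = 6 ∨ ℓ = 7 ∨ 8 ≤ ℓ by omega) with rfl | rfl | h8
    · subst hn; decide
    · subst hn; decide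
    · -- ℓ ≥ 8, n = 3ℓ
      have posℓ2 : 0 < n.choose (ℓ + 2) := Nat.choose_pos (by omega)
      have key2 : (ℓ + 2) * n.choose (ℓ + 2) = (2 * ℓ - 1) * n.choose (ℓ + 1) := by
        have := Nat.choose_succ_right_eq n (ℓ + 1)
        rw [show n - (ℓ + 1) = 2 * ℓ - 1 by omega] at this
        rw [mul_comm, this, mul_comm]
      have hupper : ∑ j ∈ Icc ℓ (2 * ℓ - 1), n.choose j ≤ ∑ j ∈ Icc ℓ (n - 1), n.choose j :=
        Finset.sum_le_sum_of_subset (Icc_subset_Icc_right (by omega))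
      have hsplit1 := sum_split n.choose (a := ℓ) (b := ℓ + 1) (c := 2 * ℓ - 1) hℓ
        (by omega) (by omega)
      have hsplit2 := sum_split n.choose (a := ℓ + 2) (b := 2 * ℓ - 2) (c := 2 * ℓ - 1)
        (by omega) (by omega) (by omega)
      have hsplit3 := sum_split n.choose (a := ℓ) (b := ℓ) (c := ℓ + 1) hℓ (by omega) (by omega)
      have hmid : (ℓ - 3) * n.choose (ℓ + 2) ≤ ∑ j ∈ Icc (ℓ + 2) (2 * ℓ - 2), n.choose j := by
        have := card_bound (n := n) (a := ℓ + 2) (b := 2 * ℓ - 2) (c := ℓ + 2) le_rfl (by omega)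
        simpa [show 2 * ℓ - 2 + 1 - (ℓ + 2) = ℓ - 3 by omega] using this
      have htop : n.choose (ℓ + 1) ≤ ∑ j ∈ Icc (2 * ℓ - 2 + 1) (2 * ℓ - 1), n.choose j := by
        rw [show 2 * ℓ - 2 + 1 = 2 * ℓ - 1 by omega]
        have : n.choose (ℓ + 1) ≤ n.choose (2 * ℓ - 1) :=
          choose_between (by omega) (by omega)
        simpa using this
      have hkey' : (ℓ + 1) * n.choose (ℓ + 1) < n.choose ℓ + 2 * n.choose (ℓ + 1)
          + (ℓ - 3) * n.choose (ℓ + 2) := by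
        have hm : (ℓ + 2) * ((ℓ + 1) * n.choose (ℓ + 1)) <
            (ℓ + 2) * (n.choose ℓ + 2 * n.choose (ℓ + 1) + (ℓ - 3) * n.choose (ℓ + 2)) := by
          have e : (ℓ + 2) * (n.choose ℓ + 2 * n.choose (ℓ + 1) + (ℓ - 3) * n.choose (ℓ + 2))
              = (ℓ + 2) * n.choose ℓ + (2 * (ℓ + 2)) * n.choose (ℓ + 1)
                + (ℓ - 3) * ((ℓ + 2) * n.choose (ℓ + 2)) := by ring
          rw [e, key2]
          obtain ⟨m, rfl⟩ : ∃ m, ℓ = m + 8 := ⟨ℓ - 8, by omega⟩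
          rw [show m + 8 - 3 = m + 5 by omega, show 2 * (m + 8) - 1 = 2 * m + 15 by omega]
          nlinarith [Nat.le_mul_of_pos_right (m + 10) posℓ,
            Nat.le_mul_of_pos_right (m * m + 8 * m + 5) posℓ1]
        exact Nat.lt_of_mul_lt_mul_left hm
      calc (n - ℓ) * n.choose ℓ = (ℓ + 1) * n.choose (ℓ + 1) := key.symm
        _ < n.choose ℓ + 2 * n.choose (ℓ + 1) + (ℓ - 3) * n.choose (ℓ + 2) := hkey'
        _ ≤ (n.choose ℓ + n.choose (ℓ + 1))
              + ((∑ j ∈ Icc (ℓ + 2) (2 * ℓ - 2), n.choose j)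
                + ∑ j ∈ Icc (2 * ℓ - 2 + 1) (2 * ℓ - 1), n.choose j) := by
            have := Nat.add_le_add hmid htop
            omega
        _ = (∑ j ∈ Icc ℓ (ℓ + 1), n.choose j) + ∑ j ∈ Icc (ℓ + 2) (2 * ℓ - 1), n.choose j := by
            rw [hsplit2]
            congr 1
            rw [← hsplit3]
            simp [Finset.Icc_add_one_left_eq_Ioc]
        _ = ∑ j ∈ Icc ℓ (2 * ℓ - 1), n.choose j := by
            rw [← hsplit1]
        _ ≤ _ := hupper

private lemma aux1 (n ℓ : ℕ) (hℓ : 3 ≤ ℓ) (h3 : 3 * ℓ ≤ n) :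
    (n - 1 - ℓ) * n.choose ℓ < ∑ j ∈ Icc ℓ (n - 2), n.choose j := by
  by_cases hexc : n = 3 * ℓ ∧ 2 ≤ ℓ ∧ ℓ ≤ 5
  · obtain ⟨hn, -, h5⟩ := hexc
    interval_cases ℓ <;> subst hn <;> decide
  · have hs := star n ℓ (by omega) h3 (by omega) hexc
    have hsplit := sum_split n.choose (a := ℓ) (b := n - 2) (c := n - 1)
      (by omega) (by omega) (by omega)
    rw [show n - 2 + 1 = n - 1 by omega] at hsplit
    have hlast : ∑ j ∈ Icc (n - 1) (n - 1), n.choose j = n := by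
      have h1 : n.choose (n - 1) = n := by
        have := Nat.choose_symm (show 1 ≤ n by omega)
        rw [Nat.choose_one_right] at this
        exact this
      simp [h1]
    have hCn : n ≤ n.choose ℓ := by
      have := choose_mono_half (show 1 ≤ ℓ by omega) (show 2 * ℓ ≤ n by omega)
      simpa using this
    rw [← hsplit, hlast] at hs
    have heq : (n - 1 - ℓ) * n.choose ℓ + n.choose ℓ = (n - ℓ) * n.choose ℓ := by
      rw [show n - ℓ = (n - 1 - ℓ) + 1 by omega]; ring
    have h2 : (n - 1 - ℓ) * n.choose ℓ + n.choose ℓ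
        < (∑ j ∈ Icc ℓ (n - 2), n.choose j) + n.choose ℓ := by
      calc (n - 1 - ℓ) * n.choose ℓ + n.choose ℓ = (n - ℓ) * n.choose ℓ := heq
        _ < (∑ j ∈ Icc ℓ (n - 2), n.choose j) + n := hs
        _ ≤ (∑ j ∈ Icc ℓ (n - 2), n.choose j) + n.choose ℓ := Nat.add_le_add_left hCn _
    exact Nat.lt_of_add_lt_add_right h2

theorem stmt_16 (n k ℓ : ℕ) (hn : 0 < n) (hk : 0 < k) (hℓ : 0 < ℓ)
    (hkn : k < n - 1) (hℓk : ℓ < k) (h3ℓ : 3 * ℓ ≤ n) :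
    ((k - ℓ + 1) * n.choose ℓ < ∑ j ∈ Finset.Icc ℓ k, n.choose j) ∧
    (¬ (n = 3 * ℓ ∧ 2 ≤ ℓ ∧ ℓ ≤ 5) →
      (n - 1 - ℓ + 1) * n.choose ℓ < ∑ j ∈ Finset.Icc ℓ (n - 1), n.choose j) := by
  have h4 : 4 ≤ n := by omega
  constructor
  · rcases le_or_gt k (n - ℓ) with hA | hB
    · have hcard : (k - ℓ + 1) * n.choose ℓ = ∑ j ∈ Icc ℓ k, n.choose ℓ := by
        rw [Finset.sum_const, Nat.card_Icc, smul_eq_mul]; congr 1; omega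
      rw [hcard]
      apply Finset.sum_lt_sum
      · intro j hj
        simp only [mem_Icc] at hj
        exact choose_between hj.1 (by omega)
      · refine ⟨ℓ + 1, ?_, choose_lt_succ (by omega)⟩
        simp only [mem_Icc]; omega
    · have hℓ3 : 3 ≤ ℓ := by omega
      have ha := aux1 n ℓ hℓ3 h3ℓ
      have hsplit := sum_split n.choose (a := ℓ) (b := k) (c := n - 2)
        (by omega) (by omega) (by omega)
      have htail : ∑ j ∈ Icc (k + 1) (n - 2), n.choose j ≤ (n - 2 - k) * n.choose ℓ := by
        have := Finset.sum_le_card_nsmul (Icc (k + 1) (n - 2)) n.choose (n.choose ℓ)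
          (fun j hj => by
            simp only [mem_Icc] at hj
            have hjn : j ≤ n := by omega
            rw [← Nat.choose_symm hjn]
            exact choose_mono_half (by omega) (by omega))
        simpa [Nat.card_Icc, smul_eq_mul,
          show n - 2 + 1 - (k + 1) = n - 2 - k by omega] using this
      have heq : (n - 1 - ℓ) * n.choose ℓ
          = (k - ℓ + 1) * n.choose ℓ + (n - 2 - k) * n.choose ℓ := by
        rw [← Nat.add_mul]; congr 1; omega
      rw [← hsplit, heq] at ha
      have h2 := lt_of_lt_of_le ha (Nat.add_le_add_left htail _)
      exact Nat.lt_of_add_lt_add_right h2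
  · intro hexc
    have hs := star n ℓ (by omega) h3ℓ h4 hexc
    rw [show n - 1 - ℓ + 1 = n - ℓ by omega]
    exact hs
end
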